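/- arXiv:2105.09994 — 6 statements merged into one kernel-verified Lean document; each statement's English description precedes it below -/
import Mathlib

section
/- Suppose k ∈ C³(ℝ^d × ℝ^d; ℝ) is symmetric and there is B ≥ 0 such that |∂^α k(x,y)| ≤ B for every multi-index α of order at most 3 and all x,y ∈ ℝ^d, suppose s ∈ C²(ℝ^d; ℝ^d) is Lipschitz, and suppose there exist M > 0 and M₀ ≥ 0 with ‖s(x)‖ ≤ M·√‖x‖ + M₀ for all x ∈ ℝ^d. Then there exists m > 0 such that ‖∇₂k_π(x,y)‖ ≤ m(1 + ‖x‖ + ‖y‖) for all x,y ∈ ℝ^d; consequently, for every compactly supported probability measure μ on ℝ^d and every y ∈ ℝ^d, ‖∫ ∇₂k_π(x,y) dμ(x)‖ ≤ m(1 + ‖y‖ + ∫ ‖x‖ dμ(x)). -/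
open MeasureTheory Function Set
open scoped RealInnerProductSpace NNReal ENNReal

noncomputable section

/-- `ℝ^d` with the Euclidean structure. -/
abbrev Ed (d : ℕ) := EuclideanSpace ℝ (Fin d)

variable {d : ℕ}

/-- Gradient of a kernel in its first variable, `∇₁k(x,y)`. -/
def grad1 (k : Ed d → Ed d → ℝ) (x y : Ed d) : Ed d :=
  gradient (fun x' => k x' y) x

/-- Gradient of a kernel in its second variable, `∇₂k(x,y)`. -/
def grad2 (k : Ed d → Ed d → ℝ) (x y : Ed d) : Ed d :=
  gradient (fun y' => k x y') y

/-- `div₁∇₂ k (x,y) = Σ_i ∂²k/∂x_i∂y_i (x,y)`. -/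
def div1grad2 (k : Ed d → Ed d → ℝ) (x y : Ed d) : ℝ :=
  ∑ i : Fin d,
    fderiv ℝ (fun x' => fderiv ℝ (fun y' => k x' y') y (EuclideanSpace.single i 1)) x
      (EuclideanSpace.single i 1)

/-- The Stein kernel `k_π` built from the base kernel `k` and the score `s = ∇ log π`. -/
def steinKernel (k : Ed d → Ed d → ℝ) (s : Ed d → Ed d) (x y : Ed d) : ℝ :=
  ⟪s x, s y⟫ * k x y + ⟪s x, grad2 k x y⟫ + ⟪grad1 k x y, s y⟫ + div1grad2 k x y

/-- Hessian of `x ↦ k(x,y)`, as a continuous linear map (`H₁k(x,y)`). -/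
def hess1 (k : Ed d → Ed d → ℝ) (x y : Ed d) : Ed d →L[ℝ] Ed d :=
  fderiv ℝ (fun x' => grad1 k x' y) x

/-- Laplacian as the sum of second directional derivatives along the standard basis. -/
def lap (f : Ed d → ℝ) (x : Ed d) : ℝ :=
  ∑ i : Fin d,
    fderiv ℝ (fun x' => fderiv ℝ f x' (EuclideanSpace.single i 1)) x (EuclideanSpace.single i 1)

namespace SK

variable {d : ℕ}

def Dk1 (k : Ed d → Ed d → ℝ) : (Ed d × Ed d) → (Ed d × Ed d) →L[ℝ] ℝ := fderiv ℝ (uncurry k)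
def Dk2 (k : Ed d → Ed d → ℝ) := fderiv ℝ (Dk1 k)
def Dk3 (k : Ed d → Ed d → ℝ) := fderiv ℝ (Dk2 k)
def e (d : ℕ) (i : Fin d) : Ed d := EuclideanSpace.single i 1

abbrev R (d : ℕ) := ContinuousLinearMap.inr ℝ (Ed d) (Ed d)
abbrev L (d : ℕ) := ContinuousLinearMap.inl ℝ (Ed d) (Ed d)

lemma hasF_sec_right {k : Ed d → Ed d → ℝ} (hk : ContDiff ℝ 3 (uncurry k)) (x y : Ed d) :
    HasFDerivAt (fun y' => k x y') ((Dk1 k (x,y)).comp (R d)) y := by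
  have hgd : HasFDerivAt (uncurry k) (Dk1 k (x,y)) (x,y) :=
    ((hk.differentiable (by norm_num)) (x,y)).hasFDerivAt
  exact hgd.comp y (hasFDerivAt_prodMk_right (𝕜 := ℝ) x y)

lemma hasF_sec_left {k : Ed d → Ed d → ℝ} (hk : ContDiff ℝ 3 (uncurry k)) (x y : Ed d) :
    HasFDerivAt (fun x' => k x' y) ((Dk1 k (x,y)).comp (L d)) x := by
  have hgd : HasFDerivAt (uncurry k) (Dk1 k (x,y)) (x,y) :=
    ((hk.differentiable (by norm_num)) (x,y)).hasFDerivAt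
  exact hgd.comp x (hasFDerivAt_prodMk_left (𝕜 := ℝ) x y)

lemma grad2_eq {k : Ed d → Ed d → ℝ} (hk : ContDiff ℝ 3 (uncurry k)) (x y : Ed d) :
    grad2 k x y = (InnerProductSpace.toDual ℝ (Ed d)).symm ((Dk1 k (x,y)).comp (R d)) := by
  simp only [grad2, gradient]
  rw [(hasF_sec_right hk x y).fderiv]

lemma grad1_eq {k : Ed d → Ed d → ℝ} (hk : ContDiff ℝ 3 (uncurry k)) (x y : Ed d) :
    grad1 k x y = (InnerProductSpace.toDual ℝ (Ed d)).symm ((Dk1 k (x,y)).comp (L d)) := by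
  simp only [grad1, gradient]
  rw [(hasF_sec_left hk x y).fderiv]

lemma contDiff_Dk1 {k : Ed d → Ed d → ℝ} (hk : ContDiff ℝ 3 (uncurry k)) :
    ContDiff ℝ 2 (Dk1 k) := hk.fderiv_right (by norm_num)

lemma contDiff_Dk2 {k : Ed d → Ed d → ℝ} (hk : ContDiff ℝ 3 (uncurry k)) :
    ContDiff ℝ 1 (Dk2 k) := (contDiff_Dk1 hk).fderiv_right (by norm_num)

lemma hasF_Dk1_right {k : Ed d → Ed d → ℝ} (hk : ContDiff ℝ 3 (uncurry k)) (x y : Ed d) :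
    HasFDerivAt (fun y' => Dk1 k (x, y')) ((Dk2 k (x,y)).comp (R d)) y := by
  have : HasFDerivAt (Dk1 k) (Dk2 k (x,y)) (x,y) :=
    (((contDiff_Dk1 hk).differentiable (by norm_num)) (x,y)).hasFDerivAt
  exact this.comp y (hasFDerivAt_prodMk_right (𝕜 := ℝ) x y)

lemma hasF_Dk1_left {k : Ed d → Ed d → ℝ} (hk : ContDiff ℝ 3 (uncurry k)) (x y : Ed d) :
    HasFDerivAt (fun x' => Dk1 k (x', y)) ((Dk2 k (x,y)).comp (L d)) x := by
  have : HasFDerivAt (Dk1 k) (Dk2 k (x,y)) (x,y) :=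
    (((contDiff_Dk1 hk).differentiable (by norm_num)) (x,y)).hasFDerivAt
  exact this.comp x (hasFDerivAt_prodMk_left (𝕜 := ℝ) x y)

lemma hasF_Dk2_right {k : Ed d → Ed d → ℝ} (hk : ContDiff ℝ 3 (uncurry k)) (x y : Ed d) :
    HasFDerivAt (fun y' => Dk2 k (x, y')) ((Dk3 k (x,y)).comp (R d)) y := by
  have : HasFDerivAt (Dk2 k) (Dk3 k (x,y)) (x,y) :=
    (((contDiff_Dk2 hk).differentiable (by norm_num)) (x,y)).hasFDerivAt
  exact HasFDerivAt.comp (g := Dk2 k) (g' := Dk3 k (x,y)) y this (hasFDerivAt_prodMk_right (𝕜 := ℝ) x y)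

lemma div1grad2_eq {k : Ed d → Ed d → ℝ} (hk : ContDiff ℝ 3 (uncurry k)) (x y : Ed d) :
    div1grad2 k x y = ∑ i : Fin d, Dk2 k (x,y) (L d (e d i)) (R d (e d i)) := by
  unfold div1grad2
  refine Finset.sum_congr rfl fun i _ => ?_
  have hfun : (fun x' => fderiv ℝ (fun y' => k x' y') y (EuclideanSpace.single i 1))
      = fun x' => (ContinuousLinearMap.apply ℝ ℝ (R d (e d i))) (Dk1 k (x', y)) := by
    funext x'
    rw [(hasF_sec_right hk x' y).fderiv]
    simp [e]
  rw [hfun]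
  have hD : HasFDerivAt
      (fun x' => (ContinuousLinearMap.apply ℝ ℝ (R d (e d i))) (Dk1 k (x', y)))
      ((ContinuousLinearMap.apply ℝ ℝ (R d (e d i))).comp ((Dk2 k (x,y)).comp (L d))) x :=
    (ContinuousLinearMap.apply ℝ ℝ (R d (e d i))).hasFDerivAt.comp x (hasF_Dk1_left hk x y)
  rw [hD.fderiv]
  simp [e]

lemma stein_eq {k : Ed d → Ed d → ℝ} (hk : ContDiff ℝ 3 (uncurry k)) (s : Ed d → Ed d)
    (x y : Ed d) :
    steinKernel k s x y = ⟪s x, s y⟫ * k x y + Dk1 k (x,y) (R d (s x)) + Dk1 k (x,y) (L d (s y))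
      + ∑ i : Fin d, Dk2 k (x,y) (L d (e d i)) (R d (e d i)) := by
  rw [steinKernel, grad2_eq hk, grad1_eq hk, div1grad2_eq hk]
  rw [real_inner_comm ((InnerProductSpace.toDual ℝ (Ed d)).symm ((Dk1 k (x, y)).comp (R d))) (s x),
    InnerProductSpace.toDual_symm_apply, InnerProductSpace.toDual_symm_apply]
  simp


def steinDeriv (k : Ed d → Ed d → ℝ) (s : Ed d → Ed d) (x y : Ed d) : Ed d →L[ℝ] ℝ :=
  (⟪s x, s y⟫ • ((Dk1 k (x,y)).comp (R d)) + k x y • ((innerSL ℝ (s x)).comp (fderiv ℝ s y)))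
  + (ContinuousLinearMap.apply ℝ ℝ (R d (s x))).comp ((Dk2 k (x,y)).comp (R d))
  + ((Dk1 k (x,y)).comp ((L d).comp (fderiv ℝ s y)) + ((Dk2 k (x,y)).comp (R d)).flip (L d (s y)))
  + ∑ i : Fin d, (ContinuousLinearMap.apply ℝ ℝ (R d (e d i))).comp
      ((ContinuousLinearMap.apply ℝ ((Ed d × Ed d) →L[ℝ] ℝ) (L d (e d i))).comp
        ((Dk3 k (x,y)).comp (R d)))

lemma stein_hasFDerivAt {k : Ed d → Ed d → ℝ} (hk : ContDiff ℝ 3 (uncurry k))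
    {s : Ed d → Ed d} (hs : ContDiff ℝ 2 s) (x y : Ed d) :
    HasFDerivAt (fun y' => steinKernel k s x y') (steinDeriv k s x y) y := by
  have hfe : (fun y' => steinKernel k s x y') = fun y' =>
      ⟪s x, s y'⟫ * k x y' + Dk1 k (x,y') (R d (s x)) + Dk1 k (x,y') (L d (s y'))
        + ∑ i : Fin d, Dk2 k (x,y') (L d (e d i)) (R d (e d i)) :=
    funext fun y' => stein_eq hk s x y'
  rw [hfe]
  have hsy : HasFDerivAt s (fderiv ℝ s y) y := ((hs.differentiable (by norm_num)) y).hasFDerivAt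
  have h1 : HasFDerivAt (fun y' => (⟪s x, s y'⟫ : ℝ)) ((innerSL ℝ (s x)).comp (fderiv ℝ s y)) y :=
    (innerSL ℝ (s x)).hasFDerivAt.comp y hsy
  have hmul := h1.mul (hasF_sec_right hk x y)
  have h3 : HasFDerivAt (fun y' => Dk1 k (x,y') (R d (s x)))
      ((ContinuousLinearMap.apply ℝ ℝ (R d (s x))).comp ((Dk2 k (x,y)).comp (R d))) y :=
    (ContinuousLinearMap.apply ℝ ℝ (R d (s x))).hasFDerivAt.comp y (hasF_Dk1_right hk x y)
  have hu : HasFDerivAt (fun y' => L d (s y')) ((L d).comp (fderiv ℝ s y)) y :=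
    (L d).hasFDerivAt.comp y hsy
  have h4 : HasFDerivAt (fun y' => Dk1 k (x,y') (L d (s y')))
      ((Dk1 k (x,y)).comp ((L d).comp (fderiv ℝ s y))
        + ((Dk2 k (x,y)).comp (R d)).flip (L d (s y))) y :=
    (hasF_Dk1_right hk x y).clm_apply hu
  have h5 : ∀ i : Fin d, HasFDerivAt (fun y' => Dk2 k (x,y') (L d (e d i)) (R d (e d i)))
      ((ContinuousLinearMap.apply ℝ ℝ (R d (e d i))).comp
        ((ContinuousLinearMap.apply ℝ ((Ed d × Ed d) →L[ℝ] ℝ) (L d (e d i))).comp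
          ((Dk3 k (x,y)).comp (R d)))) y := by
    intro i
    have ha : HasFDerivAt (fun y' => Dk2 k (x,y') (L d (e d i)))
        ((ContinuousLinearMap.apply ℝ ((Ed d × Ed d) →L[ℝ] ℝ) (L d (e d i))).comp
          ((Dk3 k (x,y)).comp (R d))) y := by
      have := (ContinuousLinearMap.apply ℝ ((Ed d × Ed d) →L[ℝ] ℝ)
        (L d (e d i))).hasFDerivAt.comp (f := fun y' => Dk2 k (x, y')) (f' := Dk3 k (x, y) ∘SL R d) y (hasF_Dk2_right hk x y)
      simpa only [Function.comp_def, ContinuousLinearMap.apply_apply] using this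
    exact (ContinuousLinearMap.apply ℝ ℝ (R d (e d i))).hasFDerivAt.comp y ha
  have h6 := HasFDerivAt.fun_sum (u := Finset.univ) (fun i _ => h5 i)
  exact ((hmul.add h3).add h4).add h6


lemma norm_pair_left (a : Ed d) : ‖((a, (0:Ed d)) : Ed d × Ed d)‖ = ‖a‖ := by
  simp [Prod.norm_def]

lemma norm_pair_right (a : Ed d) : ‖(((0:Ed d), a) : Ed d × Ed d)‖ = ‖a‖ := by
  simp [Prod.norm_def]

lemma norm6 (r1 r2 r3 r4 r5 r6 : ℝ) :
    ‖r1+r2+r3+(r4+r5)+r6‖ ≤ ‖r1‖+‖r2‖+‖r3‖+‖r4‖+‖r5‖+‖r6‖ := by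
  simp only [Real.norm_eq_abs]
  have h1 : |r1+r2+r3+(r4+r5)+r6| ≤ |r1+r2+r3| + |r4+r5| + |r6| := abs_add_three _ _ _
  have h2 : |r1+r2+r3| ≤ |r1|+|r2|+|r3| := abs_add_three _ _ _
  have h3 : |r4+r5| ≤ |r4|+|r5| := abs_add_le _ _
  linarith

lemma steinDeriv_norm_le {k : Ed d → Ed d → ℝ} {s : Ed d → Ed d}
    {B : ℝ} (hB0 : ∀ p : Ed d × Ed d, ‖uncurry k p‖ ≤ B)
    (hB1 : ∀ p, ‖Dk1 k p‖ ≤ B) (hB2 : ∀ p, ‖Dk2 k p‖ ≤ B) (hB3 : ∀ p v, ‖Dk3 k p v‖ ≤ B * ‖v‖)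
    {Cs : ℝ} (hCs0 : 0 ≤ Cs) (hCs : ∀ z, ‖fderiv ℝ s z‖ ≤ Cs) (x y : Ed d) :
    ‖steinDeriv k s x y‖ ≤
      B * (‖s x‖ * ‖s y‖ + Cs * ‖s x‖ + ‖s x‖ + Cs + ‖s y‖ + d) := by
  have hBnn : 0 ≤ B := le_trans (norm_nonneg _) (hB1 (x,y))
  apply ContinuousLinearMap.opNorm_le_bound _ (by positivity)
  intro v
  simp only [steinDeriv, ContinuousLinearMap.add_apply, ContinuousLinearMap.smul_apply,
    ContinuousLinearMap.coe_comp', Function.comp_apply, ContinuousLinearMap.flip_apply,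
    ContinuousLinearMap.apply_apply, ContinuousLinearMap.inr_apply,
    ContinuousLinearMap.inl_apply, ContinuousLinearMap.coe_sum', Finset.sum_apply,
    smul_eq_mul, innerSL_apply_apply]
  have hw : (0:ℝ) ≤ ‖v‖ := norm_nonneg v
  have hb1 : ∀ p : Ed d × Ed d, ‖Dk1 k (x,y) p‖ ≤ B * ‖p‖ := fun p =>
    ((Dk1 k (x,y)).le_opNorm p).trans
      (mul_le_mul_of_nonneg_right (hB1 _) (norm_nonneg p))
  have hb2 : ∀ p q : Ed d × Ed d, ‖Dk2 k (x,y) p q‖ ≤ B * ‖p‖ * ‖q‖ := fun p q => by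
    calc ‖Dk2 k (x,y) p q‖ ≤ ‖Dk2 k (x,y) p‖ * ‖q‖ := (Dk2 k (x,y) p).le_opNorm q
      _ ≤ (B * ‖p‖) * ‖q‖ := by
          apply mul_le_mul_of_nonneg_right _ (norm_nonneg q)
          exact ((Dk2 k (x,y)).le_opNorm p).trans
            (mul_le_mul_of_nonneg_right (hB2 _) (norm_nonneg p))
      _ = B * ‖p‖ * ‖q‖ := rfl
  have hb3 : ∀ p q r : Ed d × Ed d, ‖Dk3 k (x,y) p q r‖ ≤ B * ‖p‖ * ‖q‖ * ‖r‖ := fun p q r => by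
    calc ‖Dk3 k (x,y) p q r‖ ≤ ‖Dk3 k (x,y) p q‖ * ‖r‖ := (Dk3 k (x,y) p q).le_opNorm r
      _ ≤ (B * ‖p‖ * ‖q‖) * ‖r‖ := by
          apply mul_le_mul_of_nonneg_right _ (norm_nonneg r)
          calc ‖Dk3 k (x,y) p q‖ ≤ ‖Dk3 k (x,y) p‖ * ‖q‖ := (Dk3 k (x,y) p).le_opNorm q
            _ ≤ (B * ‖p‖) * ‖q‖ := by
                apply mul_le_mul_of_nonneg_right _ (norm_nonneg q)
                exact hB3 _ p
      _ = B * ‖p‖ * ‖q‖ * ‖r‖ := rfl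
  have hsd : ‖(fderiv ℝ s y) v‖ ≤ Cs * ‖v‖ :=
    ((fderiv ℝ s y).le_opNorm v).trans (mul_le_mul_of_nonneg_right (hCs y) hw)
  have T1 : ‖(⟪s x, s y⟫ : ℝ) * Dk1 k (x,y) ((0:Ed d), v)‖ ≤ B * (‖s x‖ * ‖s y‖) * ‖v‖ := by
    rw [norm_mul]
    have hi : ‖(⟪s x, s y⟫ : ℝ)‖ ≤ ‖s x‖ * ‖s y‖ := norm_inner_le_norm _ _
    have hd : ‖Dk1 k (x,y) ((0:Ed d), v)‖ ≤ B * ‖v‖ := by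
      have := hb1 ((0:Ed d), v); rwa [norm_pair_right] at this
    calc ‖(⟪s x, s y⟫ : ℝ)‖ * ‖Dk1 k (x,y) ((0:Ed d), v)‖
        ≤ (‖s x‖ * ‖s y‖) * (B * ‖v‖) :=
          mul_le_mul hi hd (norm_nonneg _) (by positivity)
      _ = B * (‖s x‖ * ‖s y‖) * ‖v‖ := by ring
  have T2 : ‖k x y * (⟪s x, (fderiv ℝ s y) v⟫ : ℝ)‖ ≤ B * (Cs * ‖s x‖) * ‖v‖ := by
    rw [norm_mul]
    have hkb : ‖k x y‖ ≤ B := hB0 (x,y)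
    have hi : ‖(⟪s x, (fderiv ℝ s y) v⟫ : ℝ)‖ ≤ ‖s x‖ * (Cs * ‖v‖) :=
      (norm_inner_le_norm _ _).trans
        (mul_le_mul_of_nonneg_left hsd (norm_nonneg _))
    calc ‖k x y‖ * ‖(⟪s x, (fderiv ℝ s y) v⟫ : ℝ)‖
        ≤ B * (‖s x‖ * (Cs * ‖v‖)) := mul_le_mul hkb hi (norm_nonneg _) hBnn
      _ = B * (Cs * ‖s x‖) * ‖v‖ := by ring
  have T3 : ‖Dk2 k (x,y) ((0:Ed d), v) ((0:Ed d), s x)‖ ≤ B * ‖s x‖ * ‖v‖ := by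
    have := hb2 ((0:Ed d), v) ((0:Ed d), s x)
    rw [norm_pair_right, norm_pair_right] at this
    calc ‖Dk2 k (x,y) ((0:Ed d), v) ((0:Ed d), s x)‖ ≤ B * ‖v‖ * ‖s x‖ := this
      _ = B * ‖s x‖ * ‖v‖ := by ring
  have T4 : ‖Dk1 k (x,y) ((fderiv ℝ s y) v, (0:Ed d))‖ ≤ B * Cs * ‖v‖ := by
    have := hb1 ((fderiv ℝ s y) v, (0:Ed d))
    rw [norm_pair_left] at this
    calc ‖Dk1 k (x,y) ((fderiv ℝ s y) v, (0:Ed d))‖ ≤ B * ‖(fderiv ℝ s y) v‖ := this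
      _ ≤ B * (Cs * ‖v‖) := mul_le_mul_of_nonneg_left hsd hBnn
      _ = B * Cs * ‖v‖ := by ring
  have T5 : ‖Dk2 k (x,y) ((0:Ed d), v) (s y, (0:Ed d))‖ ≤ B * ‖s y‖ * ‖v‖ := by
    have := hb2 ((0:Ed d), v) (s y, (0:Ed d))
    rw [norm_pair_right, norm_pair_left] at this
    calc ‖Dk2 k (x,y) ((0:Ed d), v) (s y, (0:Ed d))‖ ≤ B * ‖v‖ * ‖s y‖ := this
      _ = B * ‖s y‖ * ‖v‖ := by ring
  have T6 : ‖∑ i : Fin d, Dk3 k (x,y) ((0:Ed d), v) (e d i, (0:Ed d)) ((0:Ed d), e d i)‖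
      ≤ (d : ℝ) * (B * ‖v‖) := by
    calc ‖∑ i : Fin d, Dk3 k (x,y) ((0:Ed d), v) (e d i, (0:Ed d)) ((0:Ed d), e d i)‖
        ≤ ∑ i : Fin d, ‖Dk3 k (x,y) ((0:Ed d), v) (e d i, (0:Ed d)) ((0:Ed d), e d i)‖ :=
          norm_sum_le _ _
      _ ≤ ∑ _i : Fin d, B * ‖v‖ := by
          apply Finset.sum_le_sum
          intro i _
          have := hb3 ((0:Ed d), v) (e d i, (0:Ed d)) ((0:Ed d), e d i)
          rw [norm_pair_right, norm_pair_left, norm_pair_right] at this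
          have he : ‖e d i‖ = 1 := by simp [e]
          rw [he] at this
          simpa using this
      _ = (d : ℝ) * (B * ‖v‖) := by simp [Finset.sum_const, mul_comm]
  calc ‖(⟪s x, s y⟫ : ℝ) * Dk1 k (x,y) ((0:Ed d), v)
        + k x y * (⟪s x, (fderiv ℝ s y) v⟫ : ℝ)
        + Dk2 k (x,y) ((0:Ed d), v) ((0:Ed d), s x)
        + (Dk1 k (x,y) ((fderiv ℝ s y) v, (0:Ed d))
            + Dk2 k (x,y) ((0:Ed d), v) (s y, (0:Ed d)))
        + ∑ i : Fin d, Dk3 k (x,y) ((0:Ed d), v) (e d i, (0:Ed d)) ((0:Ed d), e d i)‖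
      ≤ ‖(⟪s x, s y⟫ : ℝ) * Dk1 k (x,y) ((0:Ed d), v)‖
        + ‖k x y * (⟪s x, (fderiv ℝ s y) v⟫ : ℝ)‖
        + ‖Dk2 k (x,y) ((0:Ed d), v) ((0:Ed d), s x)‖
        + ‖Dk1 k (x,y) ((fderiv ℝ s y) v, (0:Ed d))‖
        + ‖Dk2 k (x,y) ((0:Ed d), v) (s y, (0:Ed d))‖
        + ‖∑ i : Fin d, Dk3 k (x,y) ((0:Ed d), v) (e d i, (0:Ed d)) ((0:Ed d), e d i)‖ :=
        norm6 _ _ _ _ _ _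
    _ ≤ B * (‖s x‖ * ‖s y‖ + Cs * ‖s x‖ + ‖s x‖ + Cs + ‖s y‖ + d) * ‖v‖ := by
        nlinarith [T1, T2, T3, T4, T5, T6]

end SK


set_option maxHeartbeats 1000000 in
lemma scalar_bound (B Cs M M₀ : ℝ) (d : ℕ) (hB : 0 ≤ B) (hCs : 0 ≤ Cs)
    (hM : 0 < M) (hM₀ : 0 ≤ M₀) :
    ∃ m : ℝ, 0 < m ∧ ∀ a b X Y : ℝ, 0 ≤ a → 0 ≤ b → 0 ≤ X → 0 ≤ Y →
      a ≤ M * Real.sqrt X + M₀ → b ≤ M * Real.sqrt Y + M₀ →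
      B * (a*b + Cs*a + a + Cs + b + d) ≤ m * (1 + X + Y) := by
  have hc0 : (0:ℝ) ≤ M + M₀ := by linarith
  have hd0 : (0:ℝ) ≤ (d:ℝ) := Nat.cast_nonneg d
  have hKc0 : (0:ℝ) ≤ 3*(M+M₀)^2 + 2*(M+M₀)*Cs + 4*(M+M₀) + Cs + d := by
    have := sq_nonneg (M+M₀); have := mul_nonneg hc0 hCs; linarith
  refine ⟨B*(3*(M+M₀)^2 + 2*(M+M₀)*Cs + 4*(M+M₀) + Cs + d) + 1,
    by linarith [mul_nonneg hB hKc0], ?_⟩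
  intro a b X Y ha0 hb0 hX0 hY0 ha hb
  set c : ℝ := M + M₀ with hcdef
  have hu0 : 0 ≤ Real.sqrt X := Real.sqrt_nonneg _
  have hv0 : 0 ≤ Real.sqrt Y := Real.sqrt_nonneg _
  set u : ℝ := Real.sqrt X with hudef
  set v : ℝ := Real.sqrt Y with hvdef
  have hu2 : u^2 = X := Real.sq_sqrt hX0
  have hv2 : v^2 = Y := Real.sq_sqrt hY0
  have ha' : a ≤ c + c*u := by
    have : M*u ≤ c*u := mul_le_mul_of_nonneg_right (by simp [hcdef]; linarith) hu0
    simp only [hcdef] at *; linarith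
  have hb' : b ≤ c + c*v := by
    have : M*v ≤ c*v := mul_le_mul_of_nonneg_right (by simp [hcdef]; linarith) hv0
    simp only [hcdef] at *; linarith
  have hcu : (0:ℝ) ≤ c + c*u := add_nonneg hc0 (mul_nonneg hc0 hu0)
  have h_ab : a*b ≤ (c+c*u)*(c+c*v) := mul_le_mul ha' hb' hb0 hcu
  have h_csa : Cs*a ≤ Cs*(c+c*u) := mul_le_mul_of_nonneg_left ha' hCs
  have e1 : 2*u ≤ 1+u^2 := by nlinarith [sq_nonneg (u-1)]
  have e2 : 2*v ≤ 1+v^2 := by nlinarith [sq_nonneg (v-1)]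
  have e3 : 2*(u*v) ≤ u^2+v^2 := by nlinarith [sq_nonneg (u-v)]
  have key : a*b + Cs*a + a + Cs + b + (d:ℝ)
      ≤ (3*c^2 + 2*c*Cs + 4*c + Cs + d) * (1 + X + Y) := by
    rw [← hu2, ← hv2]
    linarith [mul_le_mul_of_nonneg_left e1 (sq_nonneg c),
      mul_le_mul_of_nonneg_left e2 (sq_nonneg c),
      mul_le_mul_of_nonneg_left e3 (sq_nonneg c),
      mul_le_mul_of_nonneg_left e1 (mul_nonneg hc0 hCs),
      mul_le_mul_of_nonneg_left e1 hc0, mul_le_mul_of_nonneg_left e2 hc0,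
      mul_nonneg hCs (add_nonneg (sq_nonneg u) (sq_nonneg v)),
      mul_nonneg hd0 (add_nonneg (sq_nonneg u) (sq_nonneg v)),
      h_ab, h_csa, sq_nonneg u, sq_nonneg v, mul_nonneg hc0 hc0,
      mul_nonneg hc0 hCs, mul_nonneg (mul_nonneg hc0 hCs) (sq_nonneg u),
      mul_nonneg (mul_nonneg hc0 hCs) (sq_nonneg v),
      mul_nonneg hc0 (sq_nonneg u), mul_nonneg hc0 (sq_nonneg v),
      mul_nonneg (mul_nonneg hc0 hc0) (sq_nonneg u),
      mul_nonneg (mul_nonneg hc0 hc0) (sq_nonneg v)]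
  have hXY : (0:ℝ) ≤ 1 + X + Y := by linarith
  calc B * (a*b + Cs*a + a + Cs + b + d)
      ≤ B * ((3*c^2 + 2*c*Cs + 4*c + Cs + d) * (1 + X + Y)) :=
        mul_le_mul_of_nonneg_left key hB
    _ ≤ (B*(3*c^2 + 2*c*Cs + 4*c + Cs + d) + 1) * (1 + X + Y) := by nlinarith [hXY, mul_nonneg hB hKc0]
    _ = (B*(3*(M+M₀)^2 + 2*(M+M₀)*Cs + 4*(M+M₀) + Cs + d) + 1) * (1 + X + Y) := by
        rw [hcdef]

/-- If moreover `‖s(x)‖ ≤ M√‖x‖ + M₀`, then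
`‖∇₂k_π(x,y)‖ ≤ m(1 + ‖x‖ + ‖y‖)`, and for every compactly supported probability measure `μ`,
`‖∫ ∇₂k_π(x,y) dμ(x)‖ ≤ m(1 + ‖y‖ + ∫‖x‖dμ(x))`. -/
theorem statement3 {d : ℕ}
    (k : Ed d → Ed d → ℝ) (s : Ed d → Ed d)
    (hk : ContDiff ℝ 3 (uncurry k))
    (hksymm : ∀ x y, k x y = k y x)
    (B : ℝ) (hB : 0 ≤ B)
    (hkbd : ∀ n : ℕ, n ≤ 3 → ∀ p : Ed d × Ed d,
      ‖iteratedFDeriv ℝ n (uncurry k) p‖ ≤ B)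
    (hs : ContDiff ℝ 2 s)
    (Cs : ℝ≥0) (hsLip : LipschitzWith Cs s)
    (M M₀ : ℝ) (hM : 0 < M) (hM₀ : 0 ≤ M₀)
    (hsgrowth : ∀ x, ‖s x‖ ≤ M * Real.sqrt ‖x‖ + M₀) :
    ∃ m : ℝ, 0 < m ∧
      (∀ x y, ‖grad2 (steinKernel k s) x y‖ ≤ m * (1 + ‖x‖ + ‖y‖)) ∧
      (∀ μ : Measure (Ed d), IsProbabilityMeasure μ →
        (∃ K : Set (Ed d), IsCompact K ∧ μ Kᶜ = 0) →
        ∀ y, ‖∫ x, grad2 (steinKernel k s) x y ∂μ‖ ≤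
          m * (1 + ‖y‖ + ∫ x, ‖x‖ ∂μ)) := by
  have hB0 : ∀ p : Ed d × Ed d, ‖uncurry k p‖ ≤ B := fun p => by
    have h := hkbd 0 (by norm_num) p
    rwa [norm_iteratedFDeriv_zero] at h
  have hB1 : ∀ p, ‖SK.Dk1 k p‖ ≤ B := fun p => by
    calc ‖SK.Dk1 k p‖ = ‖iteratedFDeriv ℝ 0 (fderiv ℝ (uncurry k)) p‖ :=
          (norm_iteratedFDeriv_zero).symm
      _ = ‖iteratedFDeriv ℝ (0+1) (uncurry k) p‖ := norm_iteratedFDeriv_fderiv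
      _ ≤ B := hkbd 1 (by norm_num) p
  have hB2 : ∀ p, ‖SK.Dk2 k p‖ ≤ B := fun p => by
    calc ‖SK.Dk2 k p‖ = ‖iteratedFDeriv ℝ 0 (fderiv ℝ (fderiv ℝ (uncurry k))) p‖ := by
          rw [norm_iteratedFDeriv_zero]; rfl
      _ = ‖iteratedFDeriv ℝ (0+1) (fderiv ℝ (uncurry k)) p‖ := norm_iteratedFDeriv_fderiv
      _ = ‖iteratedFDeriv ℝ (0+1+1) (uncurry k) p‖ := norm_iteratedFDeriv_fderiv
      _ ≤ B := hkbd 2 (by norm_num) p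
  have hB3 : ∀ p v, ‖SK.Dk3 k p v‖ ≤ B * ‖v‖ := fun p v => by
    have h1 : SK.Dk3 k p v = iteratedFDeriv ℝ 1 (SK.Dk2 k) p (fun _ => v) := by
      rw [iteratedFDeriv_one_apply]; rfl
    rw [h1]
    calc ‖iteratedFDeriv ℝ 1 (SK.Dk2 k) p (fun _ => v)‖
        ≤ ‖iteratedFDeriv ℝ 1 (SK.Dk2 k) p‖ * ∏ _i : Fin 1, ‖v‖ :=
          ContinuousMultilinearMap.le_opNorm _ _
      _ = ‖iteratedFDeriv ℝ 3 (uncurry k) p‖ * ‖v‖ := by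
          rw [show SK.Dk2 k = fderiv ℝ (fderiv ℝ (uncurry k)) from rfl,
            norm_iteratedFDeriv_fderiv, norm_iteratedFDeriv_fderiv]
          simp
      _ ≤ B * ‖v‖ := mul_le_mul_of_nonneg_right (hkbd 3 (by norm_num) p) (norm_nonneg v)
  have hCr : (0:ℝ) ≤ (Cs:ℝ) := Cs.coe_nonneg
  have hCs' : ∀ z, ‖fderiv ℝ s z‖ ≤ (Cs:ℝ) := fun z =>
    norm_fderiv_le_of_lipschitz ℝ hsLip
  have hgrad : ∀ x y, ‖grad2 (steinKernel k s) x y‖ = ‖SK.steinDeriv k s x y‖ := by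
    intro x y
    have h : grad2 (steinKernel k s) x y
        = (InnerProductSpace.toDual ℝ (Ed d)).symm (SK.steinDeriv k s x y) := by
      simp only [grad2, gradient]
      rw [(SK.stein_hasFDerivAt hk hs x y).fderiv]
    rw [h, LinearIsometryEquiv.norm_map]
  obtain ⟨m, hm0, hmle⟩ := scalar_bound B (Cs:ℝ) M M₀ d hB hCr hM hM₀
  have hpt : ∀ x y, ‖grad2 (steinKernel k s) x y‖ ≤ m * (1 + ‖x‖ + ‖y‖) := by
    intro x y
    rw [hgrad x y]
    refine (SK.steinDeriv_norm_le hB0 hB1 hB2 hB3 hCr hCs' x y).trans ?_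
    exact hmle ‖s x‖ ‖s y‖ ‖x‖ ‖y‖ (norm_nonneg _) (norm_nonneg _) (norm_nonneg _)
      (norm_nonneg _) (hsgrowth x) (hsgrowth y)
  refine ⟨m, hm0, hpt, ?_⟩
  intro μ hμ hsupp y
  obtain ⟨K, hKcomp, hKμ⟩ := hsupp
  haveI := hμ
  have hxint : Integrable (fun x : Ed d => ‖x‖) μ := by
    obtain ⟨rad, hrad⟩ := hKcomp.isBounded.subset_closedBall 0
    refine (integrable_const rad).mono' continuous_norm.aestronglyMeasurable ?_
    have hK : ∀ᵐ x ∂μ, x ∈ K := by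
      rw [ae_iff]
      exact hKμ
    filter_upwards [hK] with x hx
    have h := hrad hx
    rw [Metric.mem_closedBall, dist_zero_right] at h
    simpa using h
  have hint0 : Integrable (fun x : Ed d => 1 + ‖x‖ + ‖y‖) μ :=
    ((integrable_const 1).add hxint).add (integrable_const ‖y‖)
  have hint2 : Integrable (fun x : Ed d => m * (1 + ‖x‖ + ‖y‖)) μ :=
    hint0.const_mul _
  calc ‖∫ x, grad2 (steinKernel k s) x y ∂μ‖
      ≤ ∫ x, ‖grad2 (steinKernel k s) x y‖ ∂μ := norm_integral_le_integral_norm _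
    _ ≤ ∫ x, m * (1 + ‖x‖ + ‖y‖) ∂μ :=
        integral_mono_of_nonneg (Filter.Eventually.of_forall fun x => norm_nonneg _)
          hint2 (Filter.Eventually.of_forall fun x => hpt x y)
    _ = m * (1 + ‖y‖ + ∫ x, ‖x‖ ∂μ) := by
        rw [integral_const_mul]
        congr 1
        have i1 : Integrable (fun x : Ed d => 1 + ‖x‖) μ := (integrable_const 1).add hxint
        rw [integral_add i1 (integrable_const ‖y‖),
          integral_add (integrable_const 1) hxint, integral_const, integral_const]
        simp only [measure_univ, ENNReal.toReal_one, probReal_univ, smul_eq_mul, one_mul, mul_one]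
        ring
end
end

section
/- Let q be a probability measure on ℝ^d with finite second moment, ψ ∈ C_c^∞(ℝ^d), and let k_π ∈ C¹(ℝ^d × ℝ^d; ℝ) be symmetric with |k_π| integrable with respect to q⊗q. Assume there is a continuous function L : ℝ^d → [0,∞), integrable with respect to every probability measure with finite second moment, such that for every y ∈ ℝ^d the maps x ↦ ∇₁k_π(x,y) and x ↦ ∇₂k_π(x,y) are L(y)-Lipschitz. Then the function G(t) = (1/2)∬ k_π(x + t∇ψ(x), y + t∇ψ(y)) dq(x)dq(y) is differentiable on [0,1] with G′(t) = ∬ ⟨∇₁k_π(x + t∇ψ(x), y + t∇ψ(y)), ∇ψ(x)⟩ dq(x)dq(y). -/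
open MeasureTheory Function Set
open scoped RealInnerProductSpace NNReal ENNReal

noncomputable section

variable {d : ℕ}

lemma inner_gradient_eq (f : Ed d → ℝ) (x v : Ed d) :
    ⟪gradient f x, v⟫ = fderiv ℝ f x v := by
  simp [gradient, InnerProductSpace.toDual_symm_apply]

lemma kHasFDerivFst (k : Ed d → Ed d → ℝ) (hk : ContDiff ℝ 1 (uncurry k)) (x y : Ed d) :
    HasFDerivAt (fun x' => k x' y)
      ((fderiv ℝ (uncurry k) (x, y)).comp (ContinuousLinearMap.inl ℝ (Ed d) (Ed d))) x := by
  have hD := (hk.differentiable one_ne_zero (x, y)).hasFDerivAt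
  exact hD.comp (f := fun e : Ed d => (e, y)) x (hasFDerivAt_prodMk_left x y)

lemma kHasFDerivSnd (k : Ed d → Ed d → ℝ) (hk : ContDiff ℝ 1 (uncurry k)) (x y : Ed d) :
    HasFDerivAt (fun y' => k x y')
      ((fderiv ℝ (uncurry k) (x, y)).comp (ContinuousLinearMap.inr ℝ (Ed d) (Ed d))) y := by
  have hD := (hk.differentiable one_ne_zero (x, y)).hasFDerivAt
  exact hD.comp y (hasFDerivAt_prodMk_right x y)

lemma inner_grad1_eq (k : Ed d → Ed d → ℝ) (hk : ContDiff ℝ 1 (uncurry k)) (x y u : Ed d) :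
    ⟪grad1 k x y, u⟫ = fderiv ℝ (uncurry k) (x, y) (u, 0) := by
  rw [grad1, inner_gradient_eq, (kHasFDerivFst k hk x y).fderiv]
  rfl

lemma inner_grad2_eq (k : Ed d → Ed d → ℝ) (hk : ContDiff ℝ 1 (uncurry k)) (x y v : Ed d) :
    ⟪grad2 k x y, v⟫ = fderiv ℝ (uncurry k) (x, y) (0, v) := by
  rw [grad2, inner_gradient_eq, (kHasFDerivSnd k hk x y).fderiv]
  rfl

lemma fderiv_pair_eq (k : Ed d → Ed d → ℝ) (hk : ContDiff ℝ 1 (uncurry k)) (x y u v : Ed d) :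
    fderiv ℝ (uncurry k) (x, y) (u, v) = ⟪grad1 k x y, u⟫ + ⟪grad2 k x y, v⟫ := by
  rw [inner_grad1_eq k hk, inner_grad2_eq k hk, ← map_add]
  congr 1
  simp

lemma hasDerivAt_path (k : Ed d → Ed d → ℝ) (hk : ContDiff ℝ 1 (uncurry k))
    (x y a b : Ed d) (t : ℝ) :
    HasDerivAt (fun s : ℝ => k (x + s • a) (y + s • b))
      (⟪grad1 k (x + t • a) (y + t • b), a⟫ + ⟪grad2 k (x + t • a) (y + t • b), b⟫) t := by
  have hγ : HasDerivAt (fun s : ℝ => ((x + s • a, y + s • b) : Ed d × Ed d)) (a, b) t := by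
    have h1 : HasDerivAt (fun s : ℝ => x + s • a) a t := by
      simpa using (((hasDerivAt_id t).smul_const a).const_add x)
    have h2 : HasDerivAt (fun s : ℝ => y + s • b) b t := by
      simpa using (((hasDerivAt_id t).smul_const b).const_add y)
    exact h1.prodMk h2
  have hD := (hk.differentiable one_ne_zero (x + t • a, y + t • b)).hasFDerivAt
  have := hD.comp_hasDerivAt t hγ
  rwa [fderiv_pair_eq k hk] at this

lemma grad1_symm_eq (k : Ed d → Ed d → ℝ) (hsymm : ∀ x y, k x y = k y x) (x y : Ed d) :
    grad1 k x y = grad2 k y x := by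
  unfold grad1 grad2
  congr 1
  funext z
  exact hsymm z y

lemma grad1_growth (k : Ed d → Ed d → ℝ) (hsymm : ∀ x y, k x y = k y x)
    (L : Ed d → ℝ)
    (hLip1 : ∀ y x x', ‖grad1 k x y - grad1 k x' y‖ ≤ L y * ‖x - x'‖)
    (hLip2 : ∀ y x x', ‖grad2 k x y - grad2 k x' y‖ ≤ L y * ‖x - x'‖)
    (x y : Ed d) :
    ‖grad1 k x y‖ ≤ ‖grad2 k 0 0‖ + L 0 * ‖y‖ + L y * ‖x‖ := by
  have h1 := hLip1 y x 0
  have h2 := hLip2 0 y 0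
  rw [grad1_symm_eq k hsymm 0 y] at h1
  simp only [sub_zero] at h1 h2
  calc ‖grad1 k x y‖ ≤ ‖grad1 k x y - grad2 k y 0‖ + ‖grad2 k y 0 - grad2 k 0 0‖ + ‖grad2 k 0 0‖ := by
        have := norm_add₃_le (a := grad1 k x y - grad2 k y 0) (b := grad2 k y 0 - grad2 k 0 0) (c := grad2 k 0 0)
        simpa using this
    _ ≤ L y * ‖x‖ + L 0 * ‖y‖ + ‖grad2 k 0 0‖ := by gcongr
    _ = ‖grad2 k 0 0‖ + L 0 * ‖y‖ + L y * ‖x‖ := by ring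

lemma grad2_growth (k : Ed d → Ed d → ℝ) (hsymm : ∀ x y, k x y = k y x)
    (L : Ed d → ℝ)
    (hLip1 : ∀ y x x', ‖grad1 k x y - grad1 k x' y‖ ≤ L y * ‖x - x'‖)
    (hLip2 : ∀ y x x', ‖grad2 k x y - grad2 k x' y‖ ≤ L y * ‖x - x'‖)
    (x y : Ed d) :
    ‖grad2 k x y‖ ≤ ‖grad2 k 0 0‖ + L 0 * ‖y‖ + L y * ‖x‖ := by
  have h1 := hLip2 y x 0
  have h2 := hLip1 0 y 0
  rw [grad1_symm_eq k hsymm y 0, grad1_symm_eq k hsymm 0 0] at h2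
  simp only [sub_zero] at h1 h2
  calc ‖grad2 k x y‖ ≤ ‖grad2 k x y - grad2 k 0 y‖ + ‖grad2 k 0 y - grad2 k 0 0‖ + ‖grad2 k 0 0‖ := by
        have := norm_add₃_le (a := grad2 k x y - grad2 k 0 y) (b := grad2 k 0 y - grad2 k 0 0) (c := grad2 k 0 0)
        simpa using this
    _ ≤ L y * ‖x‖ + L 0 * ‖y‖ + ‖grad2 k 0 0‖ := by
        gcongr
    _ = ‖grad2 k 0 0‖ + L 0 * ‖y‖ + L y * ‖x‖ := by ring

lemma grad1_continuous (k : Ed d → Ed d → ℝ) (hk : ContDiff ℝ 1 (uncurry k)) :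
    Continuous (fun p : Ed d × Ed d => grad1 k p.1 p.2) := by
  have heq : (fun p : Ed d × Ed d => grad1 k p.1 p.2) = fun p =>
      (InnerProductSpace.toDual ℝ (Ed d)).symm
        ((fderiv ℝ (uncurry k) p).comp (ContinuousLinearMap.inl ℝ (Ed d) (Ed d))) := by
    funext p
    rw [grad1, gradient, (kHasFDerivFst k hk p.1 p.2).fderiv]
  rw [heq]
  exact (LinearIsometryEquiv.continuous _).comp
    ((hk.continuous_fderiv one_ne_zero).clm_comp continuous_const)

lemma grad2_continuous (k : Ed d → Ed d → ℝ) (hk : ContDiff ℝ 1 (uncurry k)) :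
    Continuous (fun p : Ed d × Ed d => grad2 k p.1 p.2) := by
  have heq : (fun p : Ed d × Ed d => grad2 k p.1 p.2) = fun p =>
      (InnerProductSpace.toDual ℝ (Ed d)).symm
        ((fderiv ℝ (uncurry k) p).comp (ContinuousLinearMap.inr ℝ (Ed d) (Ed d))) := by
    funext p
    rw [grad2, gradient, (kHasFDerivSnd k hk p.1 p.2).fderiv]
  rw [heq]
  exact (LinearIsometryEquiv.continuous _).comp
    ((hk.continuous_fderiv one_ne_zero).clm_comp continuous_const)

set_option maxHeartbeats 1000000 in
/-- Along the pushforward path `ρ_t = (I + t∇ψ)_#q`, the squared KSD functional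
`G(t) = (1/2)∬ k_π(x + t∇ψ(x), y + t∇ψ(y)) dq(x)dq(y)` is differentiable on `[0,1]` with
`G′(t) = ∬ ⟨∇₁k_π(x + t∇ψ(x), y + t∇ψ(y)), ∇ψ(x)⟩ dq(x)dq(y)`. -/
theorem statement6 {d : ℕ}
    (q : Measure (Ed d)) [IsProbabilityMeasure q]
    (hq2 : Integrable (fun x => ‖x‖ ^ 2) q)
    (ψ : Ed d → ℝ) (hψ : ContDiff ℝ (⊤ : ℕ∞) ψ) (hψc : HasCompactSupport ψ)
    (kπ : Ed d → Ed d → ℝ)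
    (hkC1 : ContDiff ℝ 1 (uncurry kπ))
    (hsymm : ∀ x y, kπ x y = kπ y x)
    (hkint : Integrable (fun p : Ed d × Ed d => kπ p.1 p.2) (q.prod q))
    (L : Ed d → ℝ) (hLpos : ∀ y, 0 ≤ L y) (hLcont : Continuous L)
    (hLint : ∀ ρ : Measure (Ed d), IsProbabilityMeasure ρ →
      Integrable (fun x => ‖x‖ ^ 2) ρ → Integrable L ρ)
    (hLip1 : ∀ y x x', ‖grad1 kπ x y - grad1 kπ x' y‖ ≤ L y * ‖x - x'‖)
    (hLip2 : ∀ y x x', ‖grad2 kπ x y - grad2 kπ x' y‖ ≤ L y * ‖x - x'‖) :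
    ∀ t ∈ Icc (0 : ℝ) 1,
      HasDerivWithinAt
        (fun t : ℝ => (1/2) *
          ∫ x, (∫ y, kπ (x + t • gradient ψ x) (y + t • gradient ψ y) ∂q) ∂q)
        (∫ x, (∫ y,
          ⟪grad1 kπ (x + t • gradient ψ x) (y + t • gradient ψ y), gradient ψ x⟫ ∂q) ∂q)
        (Icc 0 1) t := by
  intro t₀ ht₀
  set φ : Ed d → Ed d := gradient ψ with hφdef
  -- basic facts about φ
  have hφcont : Continuous φ := by
    have : φ = fun x => (InnerProductSpace.toDual ℝ (Ed d)).symm (fderiv ℝ ψ x) := rfl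
    rw [this]
    exact (LinearIsometryEquiv.continuous _).comp (hψ.continuous_fderiv (by simp))
  have hφcs : HasCompactSupport φ := by
    have : φ = (fun D => (InnerProductSpace.toDual ℝ (Ed d)).symm D) ∘ (fderiv ℝ ψ) := rfl
    rw [this]
    exact (hψc.fderiv ℝ).comp_left (map_zero _)
  obtain ⟨M, hM⟩ : ∃ M, ∀ x, ‖φ x‖ ≤ M := by
    obtain ⟨M, hM⟩ := hφcont.norm.bounded_above_of_compact_support hφcs.norm
    exact ⟨M, fun x => by simpa using hM x⟩
  have hM0 : 0 ≤ M := le_trans (norm_nonneg _) (hM 0)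
  -- radius of support and bound for L on a compact set
  obtain ⟨R, hR⟩ : ∃ R, tsupport φ ⊆ Metric.closedBall 0 R :=
    hφcs.isBounded.subset_closedBall 0
  set R' : ℝ := max R 0 with hR'def
  have hR' : tsupport φ ⊆ Metric.closedBall 0 R' :=
    hR.trans (Metric.closedBall_subset_closedBall (le_max_left _ _))
  obtain ⟨CK, hCK0, hCK⟩ : ∃ C, 0 ≤ C ∧ ∀ z : Ed d, ‖z‖ ≤ R' + 2*M → L z ≤ C := by
    obtain ⟨z₀, _, hz₀⟩ := (isCompact_closedBall (0 : Ed d) (R' + 2*M)).exists_isMaxOn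
      (Metric.nonempty_closedBall.2 (by positivity)) hLcont.continuousOn
    exact ⟨max (L z₀) 0, le_max_right _ _, fun z hz =>
      le_trans (hz₀ (by simpa [Metric.mem_closedBall, dist_zero_right] using hz)) (le_max_left _ _)⟩
  -- path estimates
  have hnormpath : ∀ (x : Ed d) (t : ℝ), |t| ≤ 2 → ‖x + t • φ x‖ ≤ ‖x‖ + 2*M := by
    intro x t ht
    calc ‖x + t • φ x‖ ≤ ‖x‖ + ‖t • φ x‖ := norm_add_le _ _
      _ = ‖x‖ + |t| * ‖φ x‖ := by rw [norm_smul, Real.norm_eq_abs]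
      _ ≤ ‖x‖ + 2 * M := by
          have := hM x
          have h0 := norm_nonneg (φ x)
          have h1 := abs_nonneg t
          nlinarith
  have hLpath : ∀ (y : Ed d) (t : ℝ), |t| ≤ 2 → L (y + t • φ y) ≤ L y + CK := by
    intro y t ht
    by_cases hy : y ∈ tsupport φ
    · have hy' : ‖y‖ ≤ R' := by
        simpa [Metric.mem_closedBall, dist_zero_right] using hR' hy
      have : ‖y + t • φ y‖ ≤ R' + 2*M := le_trans (hnormpath y t ht) (by linarith)
      exact le_trans (hCK _ this) (by linarith [hLpos y])
    · rw [image_eq_zero_of_notMem_tsupport hy, smul_zero, add_zero]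
      linarith
  -- constants and the dominating function
  set C₀ : ℝ := ‖grad2 kπ 0 0‖ with hC₀def
  have hC₀0 : 0 ≤ C₀ := norm_nonneg _
  set L0 : ℝ := L 0 with hL0def
  have hL00 : 0 ≤ L0 := hLpos 0
  set B1 : Ed d × Ed d → ℝ := fun p =>
    (M * C₀) * 1 + 1 * ((M * L0) * (‖p.2‖ + 2*M)) + (M * (‖p.1‖ + 2*M)) * (L p.2 + CK)
    with hB1def
  have hB1pos : ∀ p, 0 ≤ B1 p := by
    intro p
    have h1 := norm_nonneg p.1
    have h2 := norm_nonneg p.2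
    have h3 := hLpos p.2
    simp only [hB1def]
    positivity
  -- integrability over q of the basic pieces
  have hnormq : Integrable (fun x : Ed d => ‖x‖) q := by
    refine ((integrable_const (1:ℝ)).add hq2).mono continuous_norm.aestronglyMeasurable ?_
    filter_upwards with x
    have h0 := norm_nonneg x
    simp only [Pi.add_apply, norm_norm]
    rw [Real.norm_of_nonneg (by positivity)]
    nlinarith [sq_nonneg (‖x‖ - 1)]
  have hLq : Integrable L q := hLint q inferInstance hq2
  have hB1int : Integrable B1 (q.prod q) := by
    refine Integrable.add (Integrable.add ?_ ?_) ?_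
    · exact (integrable_const (M * C₀)).mul_prod (integrable_const 1)
    · exact (integrable_const (1:ℝ)).mul_prod
        (((hnormq.add (integrable_const (2*M))).const_mul (M * L0)))
    · exact (((hnormq.add (integrable_const (2*M))).const_mul M)).mul_prod
        (hLq.add (integrable_const CK))
  -- derivative integrand and its bounds
  set F' : ℝ → Ed d × Ed d → ℝ := fun t p =>
    ⟪grad1 kπ (p.1 + t • φ p.1) (p.2 + t • φ p.2), φ p.1⟫ +
    ⟪grad2 kπ (p.1 + t • φ p.1) (p.2 + t • φ p.2), φ p.2⟫ with hF'def
  have hdiff : ∀ (p : Ed d × Ed d) (t : ℝ),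
      HasDerivAt (fun s : ℝ => kπ (p.1 + s • φ p.1) (p.2 + s • φ p.2)) (F' t p) t :=
    fun p t => hasDerivAt_path kπ hkC1 p.1 p.2 (φ p.1) (φ p.2) t
  have hg1b : ∀ (p : Ed d × Ed d) (t : ℝ), |t| ≤ 2 →
      ‖grad1 kπ (p.1 + t • φ p.1) (p.2 + t • φ p.2)‖ ≤
        C₀ + L0 * (‖p.2‖ + 2*M) + (L p.2 + CK) * (‖p.1‖ + 2*M) := by
    intro p t ht
    have hg1 := grad1_growth kπ hsymm L hLip1 hLip2 (p.1 + t • φ p.1) (p.2 + t • φ p.2)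
    have hX := hnormpath p.1 t ht
    have hY := hnormpath p.2 t ht
    have hLY := hLpath p.2 t ht
    have h1 : L0 * ‖p.2 + t • φ p.2‖ ≤ L0 * (‖p.2‖ + 2*M) :=
      mul_le_mul_of_nonneg_left hY hL00
    have h2 : L (p.2 + t • φ p.2) * ‖p.1 + t • φ p.1‖ ≤ (L p.2 + CK) * (‖p.1‖ + 2*M) :=
      mul_le_mul hLY hX (norm_nonneg _) (by linarith [hLpos p.2])
    calc ‖grad1 kπ (p.1 + t • φ p.1) (p.2 + t • φ p.2)‖
        ≤ ‖grad2 kπ 0 0‖ + L 0 * ‖p.2 + t • φ p.2‖ + L (p.2 + t • φ p.2) * ‖p.1 + t • φ p.1‖ := hg1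
      _ ≤ C₀ + L0 * (‖p.2‖ + 2*M) + (L p.2 + CK) * (‖p.1‖ + 2*M) := by
          rw [hC₀def, hL0def] at *
          linarith
  have hg2b : ∀ (p : Ed d × Ed d) (t : ℝ), |t| ≤ 2 →
      ‖grad2 kπ (p.1 + t • φ p.1) (p.2 + t • φ p.2)‖ ≤
        C₀ + L0 * (‖p.2‖ + 2*M) + (L p.2 + CK) * (‖p.1‖ + 2*M) := by
    intro p t ht
    have hg1 := grad2_growth kπ hsymm L hLip1 hLip2 (p.1 + t • φ p.1) (p.2 + t • φ p.2)
    have hX := hnormpath p.1 t ht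
    have hY := hnormpath p.2 t ht
    have hLY := hLpath p.2 t ht
    have h1 : L0 * ‖p.2 + t • φ p.2‖ ≤ L0 * (‖p.2‖ + 2*M) :=
      mul_le_mul_of_nonneg_left hY hL00
    have h2 : L (p.2 + t • φ p.2) * ‖p.1 + t • φ p.1‖ ≤ (L p.2 + CK) * (‖p.1‖ + 2*M) :=
      mul_le_mul hLY hX (norm_nonneg _) (by linarith [hLpos p.2])
    calc ‖grad2 kπ (p.1 + t • φ p.1) (p.2 + t • φ p.2)‖
        ≤ ‖grad2 kπ 0 0‖ + L 0 * ‖p.2 + t • φ p.2‖ + L (p.2 + t • φ p.2) * ‖p.1 + t • φ p.1‖ := hg1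
      _ ≤ C₀ + L0 * (‖p.2‖ + 2*M) + (L p.2 + CK) * (‖p.1‖ + 2*M) := by
          rw [hC₀def, hL0def] at *
          linarith
  have hB1eq : ∀ p : Ed d × Ed d,
      B1 p = (C₀ + L0 * (‖p.2‖ + 2*M) + (L p.2 + CK) * (‖p.1‖ + 2*M)) * M := by
    intro p
    simp only [hB1def]
    ring
  have hfbound : ∀ (p : Ed d × Ed d) (t : ℝ), |t| ≤ 2 →
      |⟪grad1 kπ (p.1 + t • φ p.1) (p.2 + t • φ p.2), φ p.1⟫| ≤ B1 p := by
    intro p t ht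
    calc |⟪grad1 kπ (p.1 + t • φ p.1) (p.2 + t • φ p.2), φ p.1⟫|
        ≤ ‖grad1 kπ (p.1 + t • φ p.1) (p.2 + t • φ p.2)‖ * ‖φ p.1‖ := abs_real_inner_le_norm _ _
      _ ≤ (C₀ + L0 * (‖p.2‖ + 2*M) + (L p.2 + CK) * (‖p.1‖ + 2*M)) * M := by
          refine mul_le_mul (hg1b p t ht) (hM p.1) (norm_nonneg _) ?_
          have := norm_nonneg (grad1 kπ (p.1 + t • φ p.1) (p.2 + t • φ p.2))
          linarith [hg1b p t ht]
      _ = B1 p := (hB1eq p).symm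
  have hgbound : ∀ (p : Ed d × Ed d) (t : ℝ), |t| ≤ 2 →
      |⟪grad2 kπ (p.1 + t • φ p.1) (p.2 + t • φ p.2), φ p.2⟫| ≤ B1 p := by
    intro p t ht
    calc |⟪grad2 kπ (p.1 + t • φ p.1) (p.2 + t • φ p.2), φ p.2⟫|
        ≤ ‖grad2 kπ (p.1 + t • φ p.1) (p.2 + t • φ p.2)‖ * ‖φ p.2‖ := abs_real_inner_le_norm _ _
      _ ≤ (C₀ + L0 * (‖p.2‖ + 2*M) + (L p.2 + CK) * (‖p.1‖ + 2*M)) * M := by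
          refine mul_le_mul (hg2b p t ht) (hM p.2) (norm_nonneg _) ?_
          have := norm_nonneg (grad2 kπ (p.1 + t • φ p.1) (p.2 + t • φ p.2))
          linarith [hg2b p t ht]
      _ = B1 p := (hB1eq p).symm
  have hF'bound : ∀ (p : Ed d × Ed d) (t : ℝ), |t| ≤ 2 → ‖F' t p‖ ≤ B1 p + B1 p := by
    intro p t ht
    rw [hF'def, Real.norm_eq_abs]
    exact (abs_add_le _ _).trans (add_le_add (hfbound p t ht) (hgbound p t ht))
  -- continuity / measurability
  have hpathc : Continuous (fun x : Ed d => x + t₀ • φ x) :=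
    continuous_id.add (hφcont.const_smul t₀)
  have hFcont : ∀ t : ℝ,
      Continuous (fun p : Ed d × Ed d => kπ (p.1 + t • φ p.1) (p.2 + t • φ p.2)) := by
    intro t
    have hc : Continuous (fun x : Ed d => x + t • φ x) :=
      continuous_id.add (hφcont.const_smul t)
    exact hkC1.continuous.comp ((hc.comp continuous_fst).prodMk (hc.comp continuous_snd))
  have hpairc : ∀ t : ℝ, Continuous
      (fun p : Ed d × Ed d => ((p.1 + t • φ p.1, p.2 + t • φ p.2) : Ed d × Ed d)) := by
    intro t
    have hc : Continuous (fun x : Ed d => x + t • φ x) :=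
      continuous_id.add (hφcont.const_smul t)
    exact (hc.comp continuous_fst).prodMk (hc.comp continuous_snd)
  have hfcont : ∀ t : ℝ, Continuous
      (fun p : Ed d × Ed d => ⟪grad1 kπ (p.1 + t • φ p.1) (p.2 + t • φ p.2), φ p.1⟫) := by
    intro t
    exact Continuous.inner ((grad1_continuous kπ hkC1).comp (hpairc t))
      (hφcont.comp continuous_fst)
  have hgcont : ∀ t : ℝ, Continuous
      (fun p : Ed d × Ed d => ⟪grad2 kπ (p.1 + t • φ p.1) (p.2 + t • φ p.2), φ p.2⟫) := by
    intro t
    exact Continuous.inner ((grad2_continuous kπ hkC1).comp (hpairc t))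
      (hφcont.comp continuous_snd)
  have hF'cont : ∀ t : ℝ, Continuous (fun p => F' t p) := by
    intro t
    rw [hF'def]
    exact (hfcont t).add (hgcont t)
  -- integrability of F t for |t| ≤ 2 via the mean value inequality
  have hFlip : ∀ (p : Ed d × Ed d) (t : ℝ), |t| ≤ 2 →
      |kπ (p.1 + t • φ p.1) (p.2 + t • φ p.2)| ≤ |kπ p.1 p.2| + (B1 p + B1 p) * 2 := by
    intro p t ht
    have hmv := (convex_Icc (-2 : ℝ) 2).norm_image_sub_le_of_norm_hasDerivWithin_le
      (f := fun s : ℝ => kπ (p.1 + s • φ p.1) (p.2 + s • φ p.2)) (f' := fun s => F' s p)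
      (C := B1 p + B1 p)
      (fun s hs => (hdiff p s).hasDerivWithinAt)
      (fun s hs => hF'bound p s (abs_le.2 ⟨hs.1, hs.2⟩))
      (Set.mem_Icc.2 ⟨by norm_num, by norm_num⟩ : (0:ℝ) ∈ Icc (-2:ℝ) 2)
      (Set.mem_Icc.2 (abs_le.1 ht))
    simp only [zero_smul, add_zero, sub_zero, Real.norm_eq_abs] at hmv
    have h2 : |kπ (p.1 + t • φ p.1) (p.2 + t • φ p.2)| - |kπ p.1 p.2| ≤ (B1 p + B1 p) * |t| :=
      le_trans (abs_sub_abs_le_abs_sub _ _) hmv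
    have hb := hB1pos p
    nlinarith [abs_nonneg t]
  have hFint : ∀ t : ℝ, |t| ≤ 2 →
      Integrable (fun p : Ed d × Ed d => kπ (p.1 + t • φ p.1) (p.2 + t • φ p.2)) (q.prod q) := by
    intro t ht
    refine (hkint.norm.add ((hB1int.add hB1int).mul_const 2)).mono
      ((hFcont t).aestronglyMeasurable) ?_
    filter_upwards with p
    have h1 := hFlip p t ht
    have hb := hB1pos p
    have h2 : (0:ℝ) ≤ |kπ p.1 p.2| + (B1 p + B1 p) * 2 := by
      have := abs_nonneg (kπ p.1 p.2); linarith
    simp only [Pi.add_apply, Real.norm_eq_abs]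
    rw [abs_of_nonneg h2]
    exact h1
  have ht₀2 : |t₀| ≤ 2 := abs_le.2 ⟨by linarith [ht₀.1], by linarith [ht₀.2]⟩
  have hball : ∀ t ∈ Metric.ball t₀ 1, |t| ≤ 2 := by
    intro t htb
    rw [Metric.mem_ball, Real.dist_eq] at htb
    obtain ⟨h3, h4⟩ := ht₀
    cases' abs_le.1 htb.le with h1 h2
    exact abs_le.2 ⟨by linarith, by linarith⟩
  -- the dominated differentiation theorem
  obtain ⟨-, hder⟩ := hasDerivAt_integral_of_dominated_loc_of_deriv_le (μ := q.prod q)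
    (F := fun t (p : Ed d × Ed d) => kπ (p.1 + t • φ p.1) (p.2 + t • φ p.2))
    (F' := F') (bound := fun p => B1 p + B1 p) (x₀ := t₀) (Metric.ball_mem_nhds t₀ one_pos)
    (Filter.Eventually.of_forall fun t => (hFcont t).aestronglyMeasurable)
    (hFint t₀ ht₀2)
    ((hF'cont t₀).aestronglyMeasurable)
    (Filter.Eventually.of_forall fun p => fun t htb => hF'bound p t (hball t htb))
    (hB1int.add hB1int)
    (Filter.Eventually.of_forall fun p => fun t _ => hdiff p t)
  -- the two pieces of the derivative at t₀
  set f : Ed d × Ed d → ℝ := fun p =>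
    ⟪grad1 kπ (p.1 + t₀ • φ p.1) (p.2 + t₀ • φ p.2), φ p.1⟫ with hfdef
  set g : Ed d × Ed d → ℝ := fun p =>
    ⟪grad2 kπ (p.1 + t₀ • φ p.1) (p.2 + t₀ • φ p.2), φ p.2⟫ with hgdef
  have hf_int : Integrable f (q.prod q) := by
    refine hB1int.mono ((hfcont t₀).aestronglyMeasurable) ?_
    filter_upwards with p
    rw [Real.norm_eq_abs, Real.norm_eq_abs, abs_of_nonneg (hB1pos p)]
    exact hfbound p t₀ ht₀2
  have hg_int : Integrable g (q.prod q) := by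
    refine hB1int.mono ((hgcont t₀).aestronglyMeasurable) ?_
    filter_upwards with p
    rw [Real.norm_eq_abs, Real.norm_eq_abs, abs_of_nonneg (hB1pos p)]
    exact hgbound p t₀ ht₀2
  have hsplit : ∫ p, F' t₀ p ∂(q.prod q)
      = (∫ p, f p ∂(q.prod q)) + ∫ p, g p ∂(q.prod q) :=
    integral_add hf_int hg_int
  have hswap : ∫ p, g p ∂(q.prod q) = ∫ p, f p ∂(q.prod q) := by
    calc ∫ p, g p ∂(q.prod q) = ∫ p, g p.swap ∂(q.prod q) := (integral_prod_swap g).symm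
      _ = ∫ p, f p ∂(q.prod q) := by
          congr 1
          funext z
          simp only [hfdef, hgdef, Prod.fst_swap, Prod.snd_swap]
          rw [grad1_symm_eq kπ hsymm]
  have hval : ∫ x, (∫ y, ⟪grad1 kπ (x + t₀ • φ x) (y + t₀ • φ y), φ x⟫ ∂q) ∂q
      = ∫ p, f p ∂(q.prod q) := integral_integral hf_int
  have hder2 := (HasDerivAt.const_mul (1/2 : ℝ) hder).hasDerivWithinAt (s := Icc (0:ℝ) 1)
  have hvld : (1/2 : ℝ) * ∫ p, F' t₀ p ∂(q.prod q)
      = ∫ x, (∫ y, ⟪grad1 kπ (x + t₀ • φ x) (y + t₀ • φ y), φ x⟫ ∂q) ∂q := by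
    rw [hsplit, hswap, hval]
    ring
  rw [hvld] at hder2
  refine hder2.congr ?_ ?_
  · intro t htI
    have h2 : |t| ≤ 2 := abs_le.2 ⟨by linarith [htI.1], by linarith [htI.2]⟩
    rw [integral_integral (hFint t h2)]
  · rw [integral_integral (hFint t₀ ht₀2)]
end
end

section
/- Let k(x,y) = φ(x−y) be a symmetric translation-invariant kernel on ℝ^d with φ ∈ C³(ℝ^d) even and φ(0) > 0, and let s ∈ C¹(ℝ^d; ℝ^d). Suppose x₀ ∈ ℝ^d satisfies s(x₀) = 0 and the Jacobian matrix Js(x₀) is invertible. Then x₀ is a strict local minimizer of the map x ↦ k_π(x,x): there is a neighborhood U of x₀ such that k_π(x,x) > k_π(x₀,x₀) for every x ∈ U with x ≠ x₀. Equivalently, the Dirac mass δ_{x₀} is a strict local minimum among nearby Dirac masses of the functional F(μ) = (1/2)∬ k_π dμ⊗μ. -/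
open MeasureTheory Function Set
open scoped RealInnerProductSpace NNReal ENNReal

noncomputable section

variable {d : ℕ}

/-- If `s(x₀) = 0` with invertible Jacobian and `k(x,y) = φ(x−y)` with
`φ ∈ C³` even and `φ(0) > 0`, then `x₀` is a strict local minimizer of `x ↦ k_π(x,x)`:
the Dirac mass at `x₀` is a strict local minimum of the KSD among nearby Dirac masses. -/
theorem statement12 {d : ℕ}
    (φ : Ed d → ℝ) (hφ : ContDiff ℝ 3 φ) (hφeven : ∀ z, φ (-z) = φ z)
    (hφ0 : 0 < φ 0)
    (k : Ed d → Ed d → ℝ) (hk : ∀ x y, k x y = φ (x - y))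
    (s : Ed d → Ed d) (hs : ContDiff ℝ 1 s)
    (x₀ : Ed d) (hs0 : s x₀ = 0)
    (hJ : Function.Bijective (fderiv ℝ s x₀)) :
    ∃ U ∈ nhds x₀, ∀ x ∈ U, x ≠ x₀ →
      steinKernel k s x₀ x₀ < steinKernel k s x x := by

  -- basic differentiability facts
  have hφd : Differentiable ℝ φ := hφ.differentiable (by norm_num)
  have hgd : Differentiable ℝ (fderiv ℝ φ) :=
    (hφ.fderiv_right (m := 1) (by norm_num)).differentiable (by norm_num)
  set g := fderiv ℝ φ with hgdef
  -- derivative of `x' ↦ φ (x' - y)` and `y' ↦ φ (x - y')`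
  have H1 : ∀ x y : Ed d, HasFDerivAt (fun x' : Ed d => φ (x' - y)) (g (x - y)) x := by
    intro x y
    have := (hφd (x - y)).hasFDerivAt.comp x ((hasFDerivAt_id x).sub_const y)
    exact this
  have H2 : ∀ x y : Ed d, HasFDerivAt (fun y' : Ed d => φ (x - y')) (-(g (x - y))) y := by
    intro x y
    have := (hφd (x - y)).hasFDerivAt.comp y ((hasFDerivAt_id y).const_sub x)
    refine this.congr_fderiv ?_; ext v; simp; rfl
  -- gradient computations
  have hgrad1 : ∀ x y : Ed d, grad1 k x y
      = (InnerProductSpace.toDual ℝ (Ed d)).symm (g (x - y)) := by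
    intro x y
    have hke : (fun x' : Ed d => k x' y) = fun x' => φ (x' - y) := by
      funext x'; exact hk x' y
    simp only [grad1, gradient, hke, (H1 x y).fderiv]
  have hgrad2 : ∀ x y : Ed d, grad2 k x y
      = -(InnerProductSpace.toDual ℝ (Ed d)).symm (g (x - y)) := by
    intro x y
    have hke : (fun y' : Ed d => k x y') = fun y' => φ (x - y') := by
      funext y'; exact hk x y'
    simp only [grad2, gradient, hke, (H2 x y).fderiv, map_neg]
  -- the divergence term is constant on the diagonal
  have key : ∀ x y : Ed d, div1grad2 k x y
      = ∑ i : Fin d, -((fderiv ℝ g (x - y)) (EuclideanSpace.single i 1)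
          (EuclideanSpace.single i 1)) := by
    intro x y
    unfold div1grad2
    refine Finset.sum_congr rfl fun i _ => ?_
    have hinner : (fun x' : Ed d =>
          fderiv ℝ (fun y' => k x' y') y (EuclideanSpace.single i 1))
        = fun x' => -((g (x' - y)) (EuclideanSpace.single i 1)) := by
      funext x'
      have hke : (fun y' : Ed d => k x' y') = fun y' => φ (x' - y') := by
        funext y'; exact hk x' y'
      rw [hke, (H2 x' y).fderiv]
      simp
    rw [hinner]
    have hG : HasFDerivAt (fun x' : Ed d => g (x' - y)) (fderiv ℝ g (x - y)) x := by
      have := (hgd (x - y)).hasFDerivAt.comp x ((hasFDerivAt_id x).sub_const y)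
      exact this
    have hF : HasFDerivAt (fun x' : Ed d => (g (x' - y)) (EuclideanSpace.single i 1))
        ((ContinuousLinearMap.apply ℝ ℝ (EuclideanSpace.single i 1)).comp
          (fderiv ℝ g (x - y))) x := by
      have := ((ContinuousLinearMap.apply ℝ ℝ
        (EuclideanSpace.single i 1)).hasFDerivAt (x := g (x - y))).comp x hG
      exact this
    rw [(show HasFDerivAt (fun x' : Ed d => -((g (x' - y)) (EuclideanSpace.single i 1))) _ x from hF.neg).fderiv]
    simp
  have hdiv : ∀ x : Ed d, div1grad2 k x x = div1grad2 k x₀ x₀ := by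
    intro x; rw [key x x, key x₀ x₀, sub_self, sub_self]
  -- diagonal values of the Stein kernel
  have hdiag : ∀ x : Ed d,
      steinKernel k s x x = ⟪s x, s x⟫ * φ 0 + div1grad2 k x₀ x₀ := by
    intro x
    have hcancel : ⟪s x, grad2 k x x⟫ + ⟪grad1 k x x, s x⟫ = 0 := by
      rw [hgrad1, hgrad2, inner_neg_right,
        real_inner_comm ((InnerProductSpace.toDual ℝ (Ed d)).symm (g (x - x))) (s x)]
      ring
    have hkxx : k x x = φ 0 := by rw [hk, sub_self]
    unfold steinKernel
    rw [hkxx, hdiv x]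
    linarith [hcancel]
  -- local injectivity of s near x₀ via the inverse function theorem
  have hsd : HasStrictFDerivAt s (fderiv ℝ s x₀) x₀ :=
    hs.contDiffAt.hasStrictFDerivAt (by norm_num)
  let e : Ed d ≃L[ℝ] Ed d :=
    (LinearEquiv.ofBijective ((fderiv ℝ s x₀) : Ed d →ₗ[ℝ] Ed d)
      hJ).toContinuousLinearEquiv
  have he : (e : Ed d →L[ℝ] Ed d) = fderiv ℝ s x₀ := by ext v; rfl
  have hsd' : HasStrictFDerivAt s ((e : Ed d ≃L[ℝ] Ed d) : Ed d →L[ℝ] Ed d) x₀ := by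
    rw [he]; exact hsd
  refine ⟨(hsd'.toOpenPartialHomeomorph s).source,
    (hsd'.toOpenPartialHomeomorph s).open_source.mem_nhds
      hsd'.mem_toOpenPartialHomeomorph_source, ?_⟩
  intro x hx hne
  have hsx : s x ≠ 0 := by
    intro h0
    have hinj := (hsd'.toOpenPartialHomeomorph s).injOn
    rw [hsd'.toOpenPartialHomeomorph_coe] at hinj
    exact hne (hinj hx hsd'.mem_toOpenPartialHomeomorph_source (by rw [h0, hs0]))
  rw [hdiag x, hdiag x₀, hs0]
  have hpos : (0:ℝ) < ⟪s x, s x⟫ := by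
    rw [real_inner_self_eq_norm_sq]
    exact pow_pos (norm_pos_iff.mpr hsx) 2
  have := mul_pos hpos hφ0
  simp only [inner_zero_left, zero_mul, zero_add]
  linarith
end
end

section
/- Let 1 ≤ I ≤ d and let M = {x ∈ ℝ^d : x_i = 0 for all i < I}, with R : ℝ^d → ℝ^d the linear reflection negating the first I−1 coordinates. Let π be a probability measure with positive density p ∈ C²(ℝ^d) satisfying p(Rx) = p(x) for all x, and set s = ∇log p. Let k(x,y) = φ(‖x−y‖²/2) be a radial kernel with φ ∈ C³(ℝ). Then for all x, y ∈ M, the vector ∇₂k_π(x,y) belongs to M, i.e. the Wasserstein gradient field of the squared Kernel Stein Discrepancy is tangent to the plane of symmetry M at every point of M. -/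
open MeasureTheory Function Set
open scoped RealInnerProductSpace NNReal ENNReal

noncomputable section

variable {d : ℕ}

namespace St13

def Rmap (d I : ℕ) : Ed d ≃ₗᵢ[ℝ] Ed d where
  toLinearEquiv := LinearEquiv.ofInvolutive
    { toFun := fun x => (WithLp.toLp 2 (fun j : Fin d => if (j : ℕ) + 1 < I then -x j else x j) : Ed d)
      map_add' := by
        intro x y; ext j
        by_cases h : (j : ℕ) + 1 < I <;> simp [h, PiLp.add_apply] <;> ring
      map_smul' := by
        intro c x; ext j
        by_cases h : (j : ℕ) + 1 < I <;> simp [h, PiLp.smul_apply, smul_eq_mul, mul_comm] }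
    (by intro x; ext j; by_cases h : (j : ℕ) + 1 < I <;> simp [h])
  norm_map' := by
    intro x
    rw [EuclideanSpace.norm_eq, EuclideanSpace.norm_eq]
    congr 1
    apply Finset.sum_congr rfl
    intro j _
    by_cases h : (j : ℕ) + 1 < I <;> simp [h]

lemma Rmap_apply (I : ℕ) (x : Ed d) :
    Rmap d I x = (WithLp.toLp 2 (fun j : Fin d => if (j : ℕ) + 1 < I then -x j else x j) : Ed d) := rfl

lemma Rmap_Rmap (I : ℕ) (x : Ed d) : Rmap d I (Rmap d I x) = x := by
  ext j
  simp only [Rmap_apply]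
  by_cases h : (j : ℕ) + 1 < I <;> simp [h]

lemma Rmap_inner (I : ℕ) (x y : Ed d) : ⟪Rmap d I x, y⟫ = ⟪x, Rmap d I y⟫ := by
  conv_lhs => rw [← Rmap_Rmap I y]
  rw [LinearIsometryEquiv.inner_map_map]

lemma Rmap_single (I : ℕ) (j : Fin d) (hj : (j : ℕ) + 1 < I) :
    Rmap d I (EuclideanSpace.single j (1 : ℝ)) = -EuclideanSpace.single j 1 := by
  ext i
  simp only [Rmap_apply, PiLp.neg_apply]
  by_cases h : (i : ℕ) + 1 < I
  · simp [h]
  · have hij : i ≠ j := by rintro rfl; exact h hj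
    simp [h, EuclideanSpace.single_apply, hij]

lemma Rmap_single' (I : ℕ) (j : Fin d) (hj : ¬ (j : ℕ) + 1 < I) :
    Rmap d I (EuclideanSpace.single j (1 : ℝ)) = EuclideanSpace.single j 1 := by
  ext i
  simp only [Rmap_apply]
  by_cases h : (i : ℕ) + 1 < I
  · have hij : i ≠ j := by rintro rfl; exact hj h
    simp [h, EuclideanSpace.single_apply, hij]
  · simp [h]

/-- Unconditional chain rule for precomposition with a linear isometry equivalence. -/
lemma fderiv_comp_R {G : Type*} [NormedAddCommGroup G] [NormedSpace ℝ G]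
    (I : ℕ) (f : Ed d → G) (x v : Ed d) :
    fderiv ℝ (fun w => f (Rmap d I w)) x v = fderiv ℝ f (Rmap d I x) (Rmap d I v) := by
  set iso := (Rmap d I).toContinuousLinearEquiv with hiso
  have hco : (fun w => f (Rmap d I w)) = f ∘ iso := rfl
  by_cases h : DifferentiableAt ℝ f (Rmap d I x)
  · have hd : DifferentiableAt ℝ f (iso x) := h
    rw [hco, fderiv_comp x hd iso.differentiableAt, iso.fderiv]
    rfl
  · have h2 : ¬ DifferentiableAt ℝ (f ∘ iso) x := by
      intro hc
      exact h ((iso.comp_right_differentiableAt_iff).1 hc)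
    rw [hco, fderiv_zero_of_not_differentiableAt h2, fderiv_zero_of_not_differentiableAt h]
    simp

lemma inner_gradient (f : Ed d → ℝ) (x v : Ed d) :
    ⟪gradient f x, v⟫ = fderiv ℝ f x v :=
  InnerProductSpace.toDual_symm_apply

lemma gradient_comp_R (I : ℕ) (f : Ed d → ℝ) (x : Ed d) :
    gradient (fun w => f (Rmap d I w)) x = Rmap d I (gradient f (Rmap d I x)) := by
  apply ext_inner_right ℝ
  intro v
  rw [inner_gradient, fderiv_comp_R, Rmap_inner, ← inner_gradient]

/-- If `f` is invariant under the reflection, its gradient is equivariant. -/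
lemma gradient_invariant (I : ℕ) (f : Ed d → ℝ) (hf : ∀ w, f (Rmap d I w) = f w)
    (x : Ed d) : gradient f (Rmap d I x) = Rmap d I (gradient f x) := by
  have h := gradient_comp_R I f x
  simp only [hf] at h
  have h2 : Rmap d I (gradient f (Rmap d I x)) = gradient f x := by rw [← h]
  rw [← h2, Rmap_Rmap]

end St13

open St13 in
theorem statement13' {d : ℕ} (I : ℕ)
    (p : Ed d → ℝ)
    (hsymm : ∀ x : Ed d,
      p (WithLp.toLp 2 (fun j : Fin d => if (j : ℕ) + 1 < I then -x j else x j)) = p x)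
    (φ : ℝ → ℝ)
    (k : Ed d → Ed d → ℝ) (hk : ∀ x y, k x y = φ (‖x - y‖ ^ 2 / 2)) :
    ∀ x y : Ed d,
      (∀ i : Fin d, (i : ℕ) + 1 < I → x i = 0) →
      (∀ i : Fin d, (i : ℕ) + 1 < I → y i = 0) →
      ∀ j : Fin d, (j : ℕ) + 1 < I →
        gradient (fun y' => (⟪(gradient fun w => Real.log (p w)) x,
            (gradient fun w => Real.log (p w)) y'⟫ * k x y' +
          ⟪(gradient fun w => Real.log (p w)) x,
            gradient (fun z => k x z) y'⟫ +
          ⟪gradient (fun z => k z y') x, (gradient fun w => Real.log (p w)) y'⟫ +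
          ∑ i : Fin d,
            fderiv ℝ (fun x' => fderiv ℝ (fun y'' => k x' y'') y' (EuclideanSpace.single i 1)) x
              (EuclideanSpace.single i 1))) y j = 0 := by
  intro x y hx hy j hj
  set R := Rmap d I with hR
  set s : Ed d → Ed d := gradient fun w => Real.log (p w) with hs_def
  -- basic facts
  have hpR : ∀ w : Ed d, p (R w) = p w := by
    intro w; rw [hR, Rmap_apply]; exact hsymm w
  have hlog : ∀ w : Ed d, Real.log (p (R w)) = Real.log (p w) := by
    intro w; rw [hpR]
  have hsw : ∀ w : Ed d, s (R w) = R (s w) := by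
    intro w
    exact gradient_invariant I _ hlog w
  have hkR : ∀ z w : Ed d, k (R z) (R w) = k z w := by
    intro z w
    have hn : ‖R z - R w‖ = ‖z - w‖ := by
      rw [← map_sub]; exact (Rmap d I).norm_map _
    rw [hk, hk, hn]
  have hxR : R x = x := by
    ext i
    rw [hR, Rmap_apply]
    by_cases h : (i : ℕ) + 1 < I
    · simp [h, hx i h]
    · simp [h]
  have hyR : R y = y := by
    ext i
    rw [hR, Rmap_apply]
    by_cases h : (i : ℕ) + 1 < I
    · simp [h, hy i h]
    · simp [h]
  have hsx : R (s x) = s x := by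
    conv_rhs => rw [← hxR, hsw x]
  have hkx : ∀ z : Ed d, k x (R z) = k x z := by
    intro z
    conv_lhs => rw [← hxR]
    rw [hkR]
  -- invariance of each term of the Stein kernel
  have hinner : ∀ v : Ed d, ⟪s x, R v⟫ = ⟪s x, v⟫ := by
    intro v
    rw [← Rmap_inner, hsx]
  have hgrad2 : ∀ w : Ed d, gradient (fun z => k x z) (R w)
      = R (gradient (fun z => k x z) w) := by
    intro w
    exact gradient_invariant I _ hkx w
  have hfun1 : ∀ w : Ed d, (fun z => k z (R w)) = (fun z => k (R z) w) := by
    intro w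
    funext z
    conv_lhs => rw [← Rmap_Rmap I z]
    rw [hkR]
  have hgrad1 : ∀ w : Ed d, gradient (fun z => k z (R w)) x
      = R (gradient (fun z => k z w) x) := by
    intro w
    rw [hfun1 w]
    have h := gradient_comp_R I (fun z => k z w) x
    rw [hxR] at h
    exact h
  have hdiv : ∀ w : Ed d,
      (∑ i : Fin d, fderiv ℝ
          (fun x' => fderiv ℝ (fun y'' => k x' y'') (R w) (EuclideanSpace.single i 1)) x
          (EuclideanSpace.single i 1))
      = ∑ i : Fin d, fderiv ℝ
          (fun x' => fderiv ℝ (fun y'' => k x' y'') w (EuclideanSpace.single i 1)) x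
          (EuclideanSpace.single i 1) := by
    intro w
    apply Finset.sum_congr rfl
    intro i _
    set e : Ed d := EuclideanSpace.single i 1 with he
    have hA : ∀ x' : Ed d, fderiv ℝ (fun y'' => k x' y'') (R w) e
        = fderiv ℝ (fun y'' => k (R x') y'') w (R e) := by
      intro x'
      have hfun : (fun y'' => k x' y'') = (fun y'' => (fun z => k (R x') z) (R y'')) := by
        funext y''
        exact (hkR x' y'').symm
      rw [hfun]
      have h2 := fderiv_comp_R I (fun z => k (R x') z) (R w) e
      rw [Rmap_Rmap] at h2
      exact h2
    simp only [hA]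
    by_cases hi : (i : ℕ) + 1 < I
    · rw [he, hR, Rmap_single I i hi]
      simp only [map_neg]
      rw [fderiv_fun_neg]
      simp only [ContinuousLinearMap.neg_apply]
      have hcomp := fderiv_comp_R I
        (fun z => fderiv ℝ (fun y'' => k z y'') w (EuclideanSpace.single i 1)) x
        (EuclideanSpace.single i 1)
      rw [hxR, Rmap_single I i hi] at hcomp
      rw [hcomp, map_neg, neg_neg]
    · rw [he, hR, Rmap_single' I i hi]
      have hcomp := fderiv_comp_R I
        (fun z => fderiv ℝ (fun y'' => k z y'') w (EuclideanSpace.single i 1)) x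
        (EuclideanSpace.single i 1)
      rw [hxR, Rmap_single' I i hi] at hcomp
      rw [hcomp]
  -- the full Stein kernel (as a function of the second argument) is R-invariant
  set G : Ed d → ℝ := fun y' =>
    ⟪s x, s y'⟫ * k x y' + ⟪s x, gradient (fun z => k x z) y'⟫ +
      ⟪gradient (fun z => k z y') x, s y'⟫ +
      ∑ i : Fin d,
        fderiv ℝ (fun x' => fderiv ℝ (fun y'' => k x' y'') y' (EuclideanSpace.single i 1)) x
          (EuclideanSpace.single i 1) with hG
  have hGinv : ∀ w : Ed d, G (R w) = G w := by
    intro w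
    rw [hG]
    simp only
    rw [hsw w, hinner, hkx, hgrad2 w, hinner, hgrad1 w,
      LinearIsometryEquiv.inner_map_map, hdiv w]
  -- conclude: the gradient of G at y is orthogonal to e_j
  have hfd : fderiv ℝ G y (EuclideanSpace.single j 1) = 0 := by
    have h2 := fderiv_comp_R I G y (EuclideanSpace.single j (1:ℝ))
    rw [hyR, Rmap_single I j hj, map_neg] at h2
    have h3 : (fun w => G (Rmap d I w)) = G := funext hGinv
    rw [h3] at h2
    linarith [h2]
  have : gradient G y j = ⟪gradient G y, EuclideanSpace.single j 1⟫ := by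
    rw [real_inner_comm, EuclideanSpace.inner_single_left]
    simp
  rw [this, inner_gradient, hfd]


/-- If the density `p` of `π` is symmetric with respect to the coordinate
subspace `M = {x : x_i = 0, i < I}` (reflection negating the first `I−1` coordinates) and the
kernel is radial, then the Wasserstein gradient field `∇₂k_π` of the squared KSD is tangent to
`M` at points of `M`. -/
theorem statement13 {d : ℕ} (I : ℕ) (hI1 : 1 ≤ I) (hI2 : I ≤ d)
    (p : Ed d → ℝ) (hp : ContDiff ℝ 2 p) (hppos : ∀ x, 0 < p x)
    (π : Measure (Ed d)) [IsProbabilityMeasure π]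
    (hπ : π = (volume : Measure (Ed d)).withDensity fun x => ENNReal.ofReal (p x))
    (hsymm : ∀ x : Ed d,
      p (WithLp.toLp 2 (fun j : Fin d => if (j : ℕ) + 1 < I then -x j else x j)) = p x)
    (φ : ℝ → ℝ) (hφ : ContDiff ℝ 3 φ)
    (k : Ed d → Ed d → ℝ) (hk : ∀ x y, k x y = φ (‖x - y‖ ^ 2 / 2)) :
    ∀ x y : Ed d,
      (∀ i : Fin d, (i : ℕ) + 1 < I → x i = 0) →
      (∀ i : Fin d, (i : ℕ) + 1 < I → y i = 0) →
      ∀ j : Fin d, (j : ℕ) + 1 < I →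
        grad2 (steinKernel k (gradient fun w => Real.log (p w))) x y j = 0 := by
  intro x y hx hy j hj
  exact statement13' I p hsymm φ k hk x y hx hy j hj
end
end

section
/- Let V ∈ C¹(ℝ^d) be such that ∇V is L-Lipschitz for some L > 0 and ∫_{ℝ^d} e^{−V(x)} dx < ∞. Then V(x) → ∞ as ‖x‖ → ∞: for every A ∈ ℝ there exists R > 0 such that V(x) > A whenever ‖x‖ > R. In particular, V attains its infimum on ℝ^d. -/
open MeasureTheory Function Set
open scoped RealInnerProductSpace NNReal ENNReal

noncomputable section

variable {d : ℕ}

/-- Descent-type lemma: on a ball of radius 2 around `x`, the function `V` lies below its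
linearization at `x` plus `2L‖y-x‖`. -/
lemma descent_aux (V : Ed d → ℝ) (hV : ContDiff ℝ 1 V) (L : ℝ) (hL : 0 < L)
    (hLip : ∀ x y : Ed d, ‖gradient V x - gradient V y‖ ≤ L * ‖x - y‖)
    (x y : Ed d) (h : ‖y - x‖ ≤ 2) :
    V y ≤ V x + ⟪gradient V x, y - x⟫ + (2 * L) * ‖y - x‖ := by
  have hdiff : ∀ z, DifferentiableAt ℝ V z := fun z => (hV.differentiable one_ne_zero) z
  set c := gradient V x with hc
  set T := InnerProductSpace.toDual ℝ (Ed d) with hT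
  set F : Ed d → ℝ := fun z => V z - ⟪c, z⟫ with hF
  have hFderiv : ∀ z : Ed d, HasFDerivAt F (fderiv ℝ V z - T c) z := by
    intro z
    exact (hdiff z).hasFDerivAt.sub (T c).hasFDerivAt
  have hFdiff : ∀ z : Ed d, DifferentiableAt ℝ F z := fun z => (hFderiv z).differentiableAt
  have hfV : ∀ z : Ed d, fderiv ℝ V z = T (gradient V z) := by
    intro z
    rw [gradient, ← hT, T.apply_symm_apply]
  have hb : ∀ z ∈ Metric.closedBall x 2, ‖fderiv ℝ F z‖ ≤ 2 * L := by
    intro z hz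
    rw [(hFderiv z).fderiv, hfV z, ← map_sub]
    rw [T.norm_map]
    have h1 : ‖gradient V z - c‖ ≤ L * ‖z - x‖ := hLip z x
    have h2 : ‖z - x‖ ≤ 2 := by
      rw [← dist_eq_norm]; exact hz
    have hL0 : 0 ≤ L := hL.le
    calc ‖gradient V z - c‖ ≤ L * ‖z - x‖ := h1
      _ ≤ L * 2 := by nlinarith
      _ = 2 * L := by ring
  have hx : x ∈ Metric.closedBall x 2 := Metric.mem_closedBall_self (by norm_num)
  have hy : y ∈ Metric.closedBall x 2 := by
    rw [Metric.mem_closedBall, dist_eq_norm]; exact h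
  have := (convex_closedBall x 2).norm_image_sub_le_of_norm_fderiv_le
    (fun z _ => hFdiff z) hb hx hy
  have h3 : F y - F x ≤ (2 * L) * ‖y - x‖ := le_trans (le_abs_self _) this
  have h4 : ⟪c, y⟫ - ⟪c, x⟫ = ⟪c, y - x⟫ := by rw [inner_sub_right]
  simp only [hF] at h3
  linarith
/-- If `V ∈ C¹(ℝ^d)` has an `L`-Lipschitz gradient and `e^{−V}` is
Lebesgue-integrable, then `V(x) → ∞` as `‖x‖ → ∞`; in particular `V` attains its infimum. -/
theorem statement15 {d : ℕ}
    (V : Ed d → ℝ) (hV : ContDiff ℝ 1 V)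
    (L : ℝ) (hL : 0 < L)
    (hLip : ∀ x y : Ed d, ‖gradient V x - gradient V y‖ ≤ L * ‖x - y‖)
    (hZ : Integrable (fun x => Real.exp (-V x)) (volume : Measure (Ed d))) :
    (∀ A : ℝ, ∃ R : ℝ, 0 < R ∧ ∀ x : Ed d, R < ‖x‖ → A < V x) ∧
    ∃ x₀ : Ed d, ∀ x, V x₀ ≤ V x := by
  have hcont : Continuous V := hV.continuous
  have key : ∀ A : ℝ, ∃ R : ℝ, 0 < R ∧ ∀ x : Ed d, R < ‖x‖ → A < V x := by
    intro A
    set ε : ℝ := (volume (Metric.closedBall (0 : Ed d) 1)).toReal * Real.exp (-(A + 4 * L))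
      with hεdef
    have hvolpos : 0 < (volume (Metric.closedBall (0 : Ed d) 1)).toReal :=
      ENNReal.toReal_pos (Metric.measure_closedBall_pos volume (0 : Ed d) one_pos).ne'
        (measure_closedBall_lt_top).ne
    have hε0 : 0 < ε := mul_pos hvolpos (Real.exp_pos _)
    -- tail estimate
    have htend : Filter.Tendsto
        (fun n : ℕ => ∫ y in Metric.closedBall (0 : Ed d) n, Real.exp (-V y))
        Filter.atTop (nhds (∫ y, Real.exp (-V y))) := by
      have hU : (⋃ n : ℕ, Metric.closedBall (0 : Ed d) n) = Set.univ :=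
        Metric.iUnion_closedBall_nat 0
      have := tendsto_setIntegral_of_monotone
        (s := fun n : ℕ => Metric.closedBall (0 : Ed d) n)
        (fun n => measurableSet_closedBall)
        (fun m n hmn => Metric.closedBall_subset_closedBall (by exact_mod_cast hmn))
        (by rw [hU]; exact hZ.integrableOn)
      rwa [hU, setIntegral_univ] at this
    have htail : Filter.Tendsto
        (fun n : ℕ => ∫ y in (Metric.closedBall (0 : Ed d) n)ᶜ, Real.exp (-V y))
        Filter.atTop (nhds 0) := by
      have heq : ∀ n : ℕ, (∫ y in (Metric.closedBall (0 : Ed d) n)ᶜ, Real.exp (-V y))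
          = (∫ y, Real.exp (-V y)) - ∫ y in Metric.closedBall (0 : Ed d) n, Real.exp (-V y) := by
        intro n
        have := integral_add_compl (measurableSet_closedBall
          (x := (0 : Ed d)) (ε := (n : ℝ))) hZ
        linarith
      simp only [heq]
      have := (tendsto_const_nhds (x := ∫ y, Real.exp (-V y))
        (f := Filter.atTop (α := ℕ))).sub htend
      simpa using this
    obtain ⟨M, hM⟩ : ∃ M : ℕ,
        (∫ y in (Metric.closedBall (0 : Ed d) M)ᶜ, Real.exp (-V y)) < ε := by
      have := (htail.eventually (gt_mem_nhds hε0)).exists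
      exact this
    refine ⟨(M : ℝ) + 2, by positivity, ?_⟩
    intro x hx
    by_contra hA
    push_neg at hA
    -- `V x ≤ A`; derive a contradiction
    set c := gradient V x with hc
    set x' := x - (1 / ‖c‖) • c with hx'
    have hx'x : ‖x' - x‖ ≤ 1 := by
      rw [hx']
      simp only [sub_sub_cancel_left, norm_neg, norm_smul]
      by_cases hc0 : c = 0
      · simp [hc0]
      · have : ‖(1 / ‖c‖ : ℝ)‖ * ‖c‖ = 1 := by
          rw [Real.norm_eq_abs, abs_of_nonneg (by positivity), one_div,
            inv_mul_cancel₀ (norm_ne_zero_iff.2 hc0)]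
        rw [this]
    have hball : ∀ y ∈ Metric.closedBall x' 1, V y ≤ A + 4 * L := by
      intro y hy
      have hyx' : ‖y - x'‖ ≤ 1 := by rw [← dist_eq_norm]; exact hy
      have h1 : ‖y - x‖ ≤ 2 := by
        have : y - x = (y - x') + (x' - x) := by abel
        rw [this]
        calc ‖(y - x') + (x' - x)‖ ≤ ‖y - x'‖ + ‖x' - x‖ := norm_add_le _ _
          _ ≤ 2 := by linarith
      have h2 : ⟪c, y - x⟫ ≤ 0 := by
        by_cases hc0 : c = 0
        · simp [hc0]
        · have hcn : (0 : ℝ) < ‖c‖ := norm_pos_iff.2 hc0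
          have hyx : y - x = (y - x') - (1 / ‖c‖) • c := by rw [hx']; abel
          rw [hyx, inner_sub_right, real_inner_smul_right, real_inner_self_eq_norm_sq]
          have hcs : ⟪c, y - x'⟫ ≤ ‖c‖ := by
            calc ⟪c, y - x'⟫ ≤ ‖c‖ * ‖y - x'‖ := real_inner_le_norm c _
              _ ≤ ‖c‖ * 1 := by nlinarith
              _ = ‖c‖ := mul_one _
          have : 1 / ‖c‖ * (‖c‖ ^ 2) = ‖c‖ := by field_simp
          rw [this]
          linarith
      have hdesc := descent_aux V hV L hL hLip x y h1
      have : (2 * L) * ‖y - x‖ ≤ 4 * L := by nlinarith [norm_nonneg (y - x)]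
      rw [← hc] at hdesc
      linarith
    -- lower bound on the integral over `closedBall x' 1`
    have hlow : ε ≤ ∫ y in Metric.closedBall x' 1, Real.exp (-V y) := by
      have hge := setIntegral_ge_of_const_le (c := Real.exp (-(A + 4 * L)))
        (measurableSet_closedBall (x := x') (ε := (1 : ℝ)))
        (measure_closedBall_lt_top).ne
        (fun y hy => Real.exp_le_exp.2 (by have := hball y hy; linarith))
        hZ.integrableOn
      have hvol : volume (Metric.closedBall x' 1) = volume (Metric.closedBall (0 : Ed d) 1) :=
        Measure.addHaar_closedBall_center volume x' 1
      rw [measureReal_def, hvol, smul_eq_mul] at hge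
      rw [hεdef]
      linarith [hge]
    -- the ball lies in the tail region
    have hsub : Metric.closedBall x' 1 ⊆ (Metric.closedBall (0 : Ed d) M)ᶜ := by
      intro y hy
      have hyx' : ‖y - x'‖ ≤ 1 := by rw [← dist_eq_norm]; exact hy
      have h1 : ‖y - x‖ ≤ 2 := by
        have : y - x = (y - x') + (x' - x) := by abel
        rw [this]
        calc ‖(y - x') + (x' - x)‖ ≤ ‖y - x'‖ + ‖x' - x‖ := norm_add_le _ _
          _ ≤ 2 := by linarith
      have hyn : (M : ℝ) < ‖y‖ := by
        have h' : ‖x‖ - ‖y‖ ≤ ‖x - y‖ := norm_sub_norm_le x y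
        have h'' : ‖x - y‖ = ‖y - x‖ := norm_sub_rev x y
        linarith
      simp only [Set.mem_compl_iff, Metric.mem_closedBall, dist_zero_right, not_le]
      exact hyn
    have hmono : (∫ y in Metric.closedBall x' 1, Real.exp (-V y))
        ≤ ∫ y in (Metric.closedBall (0 : Ed d) M)ᶜ, Real.exp (-V y) := by
      refine setIntegral_mono_set hZ.integrableOn ?_ (HasSubset.Subset.eventuallyLE hsub)
      exact Filter.Eventually.of_forall fun y => (Real.exp_pos _).le
    linarith
  refine ⟨key, ?_⟩
  obtain ⟨R, hR0, hR⟩ := key (V 0)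
  obtain ⟨x₀, hx₀mem, hx₀⟩ := (isCompact_closedBall (0 : Ed d) R).exists_isMinOn
    ⟨0, Metric.mem_closedBall_self hR0.le⟩ hcont.continuousOn
  refine ⟨x₀, fun x => ?_⟩
  by_cases hxm : x ∈ Metric.closedBall (0 : Ed d) R
  · exact hx₀ hxm
  · have h1 : R < ‖x‖ := by
      simpa [Metric.mem_closedBall, dist_zero_right, not_le] using hxm
    have h2 : V 0 < V x := hR x h1
    have h3 : V x₀ ≤ V 0 := hx₀ (Metric.mem_closedBall_self hR0.le)
    linarith
end
end

section
/- Let k ∈ C³(ℝ^d × ℝ^d; ℝ) be symmetric and s ∈ C²(ℝ^d; ℝ^d), with associated Stein kernel k_π and functional F(μ) = (1/2)∬ k_π dμ⊗μ. Assume there is a continuous function L : ℝ^d → [0,∞), integrable with respect to every probability measure with finite second moment, such that for every y ∈ ℝ^d the maps x ↦ ∇₁k_π(x,y) and x ↦ ∇₂k_π(x,y) are L(y)-Lipschitz. Let μ be a compactly supported probability measure on ℝ^d, set v_μ(y) = ∫ ∇₂k_π(x,y) dμ(x), and let ρ_t = (id − t·v_μ)_# μ for t ∈ [0,1]. Then t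 ↦ F(ρ_t) is differentiable at t = 0 and (d/dt) F(ρ_t)|_{t=0} = −∫ ‖v_μ(y)‖² dμ(y) ≤ 0; i.e. the squared Kernel Stein Discrepancy decreases at first order along the direction of its Wasserstein gradient. -/
open MeasureTheory Function Set
open scoped RealInnerProductSpace NNReal ENNReal

noncomputable section

variable {d : ℕ}

open scoped Topology

-- partial fderiv lemmas
lemma partial_fst {f : Ed d × Ed d → ℝ} {x y : Ed d} (hf : DifferentiableAt ℝ f (x, y)) :
    fderiv ℝ (fun x' => f (x', y)) x =
      (fderiv ℝ f (x, y)).comp (ContinuousLinearMap.inl ℝ (Ed d) (Ed d)) :=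
  (hf.hasFDerivAt.comp x (hasFDerivAt_prodMk_left x y)).fderiv

lemma partial_snd {f : Ed d × Ed d → ℝ} {x y : Ed d} (hf : DifferentiableAt ℝ f (x, y)) :
    fderiv ℝ (fun y' => f (x, y')) y =
      (fderiv ℝ f (x, y)).comp (ContinuousLinearMap.inr ℝ (Ed d) (Ed d)) :=
  (hf.hasFDerivAt.comp y (hasFDerivAt_prodMk_right x y)).fderiv


lemma grad1_eq {k : Ed d → Ed d → ℝ} (hk : Differentiable ℝ (uncurry k)) (x y : Ed d) :
    grad1 k x y = (InnerProductSpace.toDual ℝ (Ed d)).symm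
      ((fderiv ℝ (uncurry k) (x, y)).comp (ContinuousLinearMap.inl ℝ (Ed d) (Ed d))) := by
  exact congrArg (InnerProductSpace.toDual ℝ (Ed d)).symm (partial_fst (hk (x, y)))

lemma grad2_eq {k : Ed d → Ed d → ℝ} (hk : Differentiable ℝ (uncurry k)) (x y : Ed d) :
    grad2 k x y = (InnerProductSpace.toDual ℝ (Ed d)).symm
      ((fderiv ℝ (uncurry k) (x, y)).comp (ContinuousLinearMap.inr ℝ (Ed d) (Ed d))) := by
  exact congrArg (InnerProductSpace.toDual ℝ (Ed d)).symm (partial_snd (hk (x, y)))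

lemma contDiff_grad1 {k : Ed d → Ed d → ℝ} (hk : ContDiff ℝ 3 (uncurry k)) :
    ContDiff ℝ 2 (fun p : Ed d × Ed d => grad1 k p.1 p.2) := by
  have h1 : ContDiff ℝ 2 (fun p : Ed d × Ed d =>
      (fderiv ℝ (uncurry k) p).comp (ContinuousLinearMap.inl ℝ (Ed d) (Ed d))) :=
    (hk.fderiv_right (by norm_num)).clm_comp contDiff_const
  have h2 := ((InnerProductSpace.toDual ℝ (Ed d)).symm.contDiff (n := 2)).comp h1
  have he : (fun p : Ed d × Ed d => grad1 k p.1 p.2) = _ :=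
    funext fun p => grad1_eq (hk.differentiable (by norm_num)) p.1 p.2
  rw [he]; exact h2

lemma contDiff_grad2 {k : Ed d → Ed d → ℝ} (hk : ContDiff ℝ 3 (uncurry k)) :
    ContDiff ℝ 2 (fun p : Ed d × Ed d => grad2 k p.1 p.2) := by
  have h1 : ContDiff ℝ 2 (fun p : Ed d × Ed d =>
      (fderiv ℝ (uncurry k) p).comp (ContinuousLinearMap.inr ℝ (Ed d) (Ed d))) :=
    (hk.fderiv_right (by norm_num)).clm_comp contDiff_const
  have h2 := ((InnerProductSpace.toDual ℝ (Ed d)).symm.contDiff (n := 2)).comp h1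
  have he : (fun p : Ed d × Ed d => grad2 k p.1 p.2) = _ :=
    funext fun p => grad2_eq (hk.differentiable (by norm_num)) p.1 p.2
  rw [he]; exact h2

lemma div1grad2_eq {k : Ed d → Ed d → ℝ} (hk : ContDiff ℝ 3 (uncurry k)) (x y : Ed d) :
    div1grad2 k x y = ∑ i : Fin d,
      fderiv ℝ (fderiv ℝ (uncurry k)) (x, y) (EuclideanSpace.single i 1, 0)
        (0, EuclideanSpace.single i 1) := by
  refine Finset.sum_congr rfl fun i _ => ?_
  set e : Ed d := EuclideanSpace.single i 1
  set w : Ed d × Ed d := (0, e)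
  have hkd : Differentiable ℝ (uncurry k) := hk.differentiable (by norm_num)
  have hG : ContDiff ℝ 2 (fun p : Ed d × Ed d => fderiv ℝ (uncurry k) p w) :=
    (hk.fderiv_right (by norm_num)).clm_apply contDiff_const
  have step1 : (fun x' => fderiv ℝ (fun y' => k x' y') y e) =
      fun x' => fderiv ℝ (uncurry k) (x', y) w := by
    funext x'
    rw [show fderiv ℝ (fun y' => k x' y') y = (fderiv ℝ (uncurry k) (x', y)).comp
      (ContinuousLinearMap.inr ℝ (Ed d) (Ed d)) from partial_snd (hkd (x', y))]
    simp [w]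
  rw [step1]
  have step2 : fderiv ℝ (fun x' => fderiv ℝ (uncurry k) (x', y) w) x =
      (fderiv ℝ (fun p : Ed d × Ed d => fderiv ℝ (uncurry k) p w) (x, y)).comp
        (ContinuousLinearMap.inl ℝ (Ed d) (Ed d)) :=
    partial_fst (hG.differentiable (by norm_num) (x, y))
  rw [step2]
  have hc : DifferentiableAt ℝ (fderiv ℝ (uncurry k)) (x, y) :=
    (hk.fderiv_right (m := 2) (by norm_num)).differentiable (by norm_num) (x, y)
  have step3 : fderiv ℝ (fun p : Ed d × Ed d => fderiv ℝ (uncurry k) p w) (x, y) =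
      (fderiv ℝ (fderiv ℝ (uncurry k)) (x, y)).flip w := by
    rw [fderiv_clm_apply hc (differentiableAt_const w)]
    simp
  rw [step3]
  simp

lemma contDiff_div1grad2 {k : Ed d → Ed d → ℝ} (hk : ContDiff ℝ 3 (uncurry k)) :
    ContDiff ℝ 1 (fun p : Ed d × Ed d => div1grad2 k p.1 p.2) := by
  have he : (fun p : Ed d × Ed d => div1grad2 k p.1 p.2) =
      fun p : Ed d × Ed d => ∑ i : Fin d,
        fderiv ℝ (fderiv ℝ (uncurry k)) p (EuclideanSpace.single i 1, 0)
          (0, EuclideanSpace.single i 1) :=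
    funext fun p => div1grad2_eq hk p.1 p.2
  rw [he]
  refine ContDiff.sum fun i _ => ?_
  have h1 : ContDiff ℝ 1 (fderiv ℝ (fderiv ℝ (uncurry k))) :=
    (hk.fderiv_right (m := 2) (by norm_num)).fderiv_right (by norm_num)
  exact (h1.clm_apply contDiff_const).clm_apply contDiff_const

section swap
variable {f : Ed d × Ed d → ℝ}

def σL : (Ed d × Ed d) →L[ℝ] (Ed d × Ed d) :=
  (ContinuousLinearEquiv.prodComm ℝ (Ed d) (Ed d)).toContinuousLinearMap

lemma σL_apply (p : Ed d × Ed d) : σL p = p.swap := rfl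

lemma fderiv_swap_eq (hf : Differentiable ℝ f) (hsy : ∀ a b, f (a, b) = f (b, a))
    (p : Ed d × Ed d) : fderiv ℝ f p = (fderiv ℝ f p.swap).comp σL := by
  have hfs : f = fun q => f q.swap := funext fun q => hsy q.1 q.2
  have h : HasFDerivAt (fun q : Ed d × Ed d => f q.swap) ((fderiv ℝ f p.swap).comp σL) p :=
    (hf p.swap).hasFDerivAt.comp p (σL.hasFDerivAt)
  conv_lhs => rw [hfs]
  exact h.fderiv

lemma fderiv2_swap (hf : ContDiff ℝ 2 f) (hsy : ∀ a b, f (a, b) = f (b, a))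
    (p u w : Ed d × Ed d) :
    fderiv ℝ (fderiv ℝ f) p u w = fderiv ℝ (fderiv ℝ f) p.swap u.swap w.swap := by
  have hdf : Differentiable ℝ f := hf.differentiable (by norm_num)
  have hf' : ContDiff ℝ 1 (fderiv ℝ f) := hf.fderiv_right (by norm_num)
  set Ψ : ((Ed d × Ed d) →L[ℝ] ℝ) →L[ℝ] ((Ed d × Ed d) →L[ℝ] ℝ) :=
    (ContinuousLinearMap.compL ℝ (Ed d × Ed d) (Ed d × Ed d) ℝ).flip σL with hΨ
  have hA : HasFDerivAt (fun q : Ed d × Ed d => Ψ (fderiv ℝ f (σL q)))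
      (Ψ.comp ((fderiv ℝ (fderiv ℝ f) p.swap).comp σL)) p :=
    Ψ.hasFDerivAt.comp p
      (((hf'.differentiable (by norm_num) p.swap).hasFDerivAt).comp p σL.hasFDerivAt)
  have hAe : (fun q : Ed d × Ed d => Ψ (fderiv ℝ f (σL q))) = fderiv ℝ f := by
    funext q
    exact (fderiv_swap_eq hdf hsy q).symm
  rw [hAe] at hA
  rw [hA.fderiv]
  rfl
end swap

section symm
variable {k : Ed d → Ed d → ℝ}

lemma grad2_symm (hksymm : ∀ x y, k x y = k y x) (x y : Ed d) :
    grad2 k x y = grad1 k y x := by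
  simp only [grad1, grad2]
  congr 1
  funext t
  exact hksymm x t

lemma div1grad2_symm (hk : ContDiff ℝ 3 (uncurry k)) (hksymm : ∀ x y, k x y = k y x)
    (x y : Ed d) : div1grad2 k x y = div1grad2 k y x := by
  have hsy : ∀ a b : Ed d, uncurry k (a, b) = uncurry k (b, a) := fun a b => hksymm a b
  have hf2 : ContDiff ℝ 2 (uncurry k) := hk.of_le (by norm_num)
  rw [div1grad2_eq hk x y, div1grad2_eq hk y x]
  refine Finset.sum_congr rfl fun i _ => ?_
  have h1 := fderiv2_swap hf2 hsy (y, x) (EuclideanSpace.single i 1, 0)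
    (0, EuclideanSpace.single i 1)
  have h2 := (hk.contDiffAt (x := (x, y))).isSymmSndFDerivAt (by norm_num)
    (EuclideanSpace.single i 1, 0) (0, EuclideanSpace.single i 1)
  rw [h1]
  exact (h2.trans rfl).symm ▸ (by simpa using h2.symm)
end symm

section stein
variable {k : Ed d → Ed d → ℝ} {s : Ed d → Ed d}

lemma contDiff_stein (hk : ContDiff ℝ 3 (uncurry k)) (hs : ContDiff ℝ 2 s) :
    ContDiff ℝ 1 (uncurry (steinKernel k s)) := by
  have h1 : ContDiff ℝ 1 (fun p : Ed d × Ed d => ⟪s p.1, s p.2⟫ * k p.1 p.2) := by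
    have := ((hs.comp contDiff_fst).inner ℝ (hs.comp contDiff_snd)).mul
      (hk.of_le (show (2 : WithTop ℕ∞) ≤ 3 by norm_num))
    exact this.of_le (by norm_num)
  have h2 : ContDiff ℝ 1 (fun p : Ed d × Ed d => ⟪s p.1, grad2 k p.1 p.2⟫) := by
    have := (hs.comp contDiff_fst).inner ℝ (contDiff_grad2 hk)
    exact this.of_le (by norm_num)
  have h3 : ContDiff ℝ 1 (fun p : Ed d × Ed d => ⟪grad1 k p.1 p.2, s p.2⟫) := by
    have := (contDiff_grad1 hk).inner ℝ (hs.comp contDiff_snd)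
    exact this.of_le (by norm_num)
  have h4 := contDiff_div1grad2 hk
  exact ((h1.add h2).add h3).add h4

lemma stein_symm (hk : ContDiff ℝ 3 (uncurry k)) (hksymm : ∀ x y, k x y = k y x)
    (x y : Ed d) : steinKernel k s x y = steinKernel k s y x := by
  simp only [steinKernel]
  rw [real_inner_comm (s x) (s y), hksymm x y, div1grad2_symm hk hksymm x y,
    grad2_symm hksymm x y, grad2_symm hksymm y x,
    real_inner_comm (s x) (grad1 k y x), real_inner_comm (grad1 k x y) (s y)]
  ring
end stein

/-- Taylor-type bound for a function with Lipschitz gradient. -/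
lemma taylor_bound {f : Ed d → ℝ} {G : Ed d → Ed d}
    (hf : ∀ x, HasGradientAt f (G x) x) {M : ℝ} (hM : 0 ≤ M)
    (hLip : ∀ a b, ‖G a - G b‖ ≤ M * ‖a - b‖) (a b : Ed d) :
    |f b - f a - ⟪G a, b - a⟫| ≤ M * ‖b - a‖ ^ 2 := by
  set T := InnerProductSpace.toDual ℝ (Ed d) with hT
  set g : Ed d → ℝ := fun x => f x - ⟪G a, x⟫ with hg
  have hgd : ∀ x, HasFDerivAt g (T (G x) - T (G a)) x := by
    intro x
    have h1 : HasFDerivAt f (T (G x)) x := (hf x).hasFDerivAt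
    have h2 : HasFDerivAt (fun y => ⟪G a, y⟫) (T (G a)) x := by
      have := (T (G a)).hasFDerivAt (x := x)
      convert this using 2
      rfl
    exact h1.sub h2
  have hseg : ∀ x ∈ segment ℝ a b, ‖x - a‖ ≤ ‖b - a‖ := by
    intro x hx
    rw [segment_eq_image'] at hx
    obtain ⟨θ, hθ, rfl⟩ := hx
    rw [add_sub_cancel_left, norm_smul, Real.norm_eq_abs, abs_of_nonneg hθ.1]
    exact mul_le_of_le_one_left (norm_nonneg _) hθ.2
  have bound : ∀ x ∈ segment ℝ a b, ‖T (G x) - T (G a)‖ ≤ M * ‖b - a‖ := by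
    intro x hx
    rw [← map_sub, T.norm_map]
    exact (hLip x a).trans (mul_le_mul_of_nonneg_left (hseg x hx) hM)
  have mvt := (convex_segment a b).norm_image_sub_le_of_norm_hasFDerivWithin_le
    (fun x hx => (hgd x).hasFDerivWithinAt) bound (left_mem_segment ℝ a b)
    (right_mem_segment ℝ a b)
  have hgba : g b - g a = f b - f a - ⟪G a, b - a⟫ := by
    simp only [hg, inner_sub_right]
    ring
  calc |f b - f a - ⟪G a, b - a⟫| = ‖g b - g a‖ := by rw [hgba]; rfl
    _ ≤ M * ‖b - a‖ * ‖b - a‖ := mvt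
    _ = M * ‖b - a‖ ^ 2 := by ring

lemma integrable_of_compact_null {X : Type*} [NormedAddCommGroup X]
    {μ : Measure (Ed d × Ed d)} [IsFiniteMeasure μ] {K : Set (Ed d × Ed d)}
    (hK : IsCompact K) (h0 : μ Kᶜ = 0) {f : Ed d × Ed d → X} (hf : Continuous f) :
    Integrable f μ := by
  obtain ⟨C, hC⟩ := hK.exists_bound_of_continuousOn hf.continuousOn
  have hae : ∀ᵐ x ∂μ, x ∈ K := by
    rw [ae_iff]
    exact h0
  refine Integrable.mono' (integrable_const C) hf.aestronglyMeasurable ?_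
  filter_upwards [hae] with x hx
  exact hC x hx

lemma integrable_of_compact_null₁ {X : Type*} [NormedAddCommGroup X]
    {μ : Measure (Ed d)} [IsFiniteMeasure μ] {K : Set (Ed d)}
    (hK : IsCompact K) (h0 : μ Kᶜ = 0) {f : Ed d → X} (hf : Continuous f) :
    Integrable f μ := by
  obtain ⟨C, hC⟩ := hK.exists_bound_of_continuousOn hf.continuousOn
  have hae : ∀ᵐ x ∂μ, x ∈ K := by
    rw [ae_iff]
    exact h0
  refine Integrable.mono' (integrable_const C) hf.aestronglyMeasurable ?_
  filter_upwards [hae] with x hx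
  exact hC x hx

lemma hasDerivWithinAt_of_quadratic {g : ℝ → ℝ} {D C : ℝ}
    (h : ∀ t ∈ Icc (0:ℝ) 1, |g t - g 0 - t * D| ≤ C * t ^ 2) :
    HasDerivWithinAt g D (Icc 0 1) 0 := by
  rw [hasDerivWithinAt_iff_isLittleO]
  have h1 : (fun t : ℝ => g t - g 0 - (t - 0) • D) =O[𝓝[Icc (0:ℝ) 1] 0]
      (fun t => t ^ 2) := by
    refine Asymptotics.IsBigO.of_bound C ?_
    filter_upwards [self_mem_nhdsWithin] with t ht
    simp only [sub_zero, smul_eq_mul, Real.norm_eq_abs]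
    calc |g t - g 0 - t * D| ≤ C * t ^ 2 := h t ht
      _ ≤ C * |t ^ 2| := by
          rw [abs_pow, sq_abs]
  have h2 : (fun t : ℝ => t ^ 2) =o[𝓝[Icc (0:ℝ) 1] 0] (fun t : ℝ => t - 0) := by
    simp only [sub_zero]
    refine Asymptotics.IsLittleO.mono ?_ nhdsWithin_le_nhds
    refine Asymptotics.isLittleO_iff.2 fun c hc => ?_
    have hball : ∀ᶠ t : ℝ in 𝓝 0, |t| ≤ c := by
      filter_upwards [Metric.ball_mem_nhds (0:ℝ) hc] with t ht
      rw [Metric.mem_ball, dist_zero_right, Real.norm_eq_abs] at ht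
      exact ht.le
    filter_upwards [hball] with t ht
    calc ‖t ^ 2‖ = |t| * |t| := by
          rw [Real.norm_eq_abs, abs_pow, sq]
      _ ≤ c * |t| := mul_le_mul_of_nonneg_right ht (abs_nonneg t)
      _ = c * ‖t‖ := by rw [Real.norm_eq_abs]
  exact h1.trans_isLittleO h2


section kappa
variable {κ : Ed d → Ed d → ℝ}

lemma hd1_aux (hκd : Differentiable ℝ (uncurry κ)) (y : Ed d) :
    Differentiable ℝ (fun x' => κ x' y) :=
  hκd.comp (f := fun x' => (x', y)) (differentiable_id.prodMk (differentiable_const y))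

lemma hd2_aux (hκd : Differentiable ℝ (uncurry κ)) (x : Ed d) :
    Differentiable ℝ (fun y' => κ x y') :=
  hκd.comp (f := fun y' => (x, y')) ((differentiable_const x).prodMk differentiable_id)

lemma hg1_aux (hκd : Differentiable ℝ (uncurry κ)) (y x : Ed d) :
    HasGradientAt (fun x' => κ x' y) (grad1 κ x y) x :=
  (hd1_aux hκd y x).hasGradientAt

lemma hg2_aux (hκd : Differentiable ℝ (uncurry κ)) (x y : Ed d) :
    HasGradientAt (fun y' => κ x y') (grad2 κ x y) y :=
  (hd2_aux hκd x y).hasGradientAt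

lemma hG1cont_aux (hκ1 : ContDiff ℝ 1 (uncurry κ)) :
    Continuous (fun p : Ed d × Ed d => grad1 κ p.1 p.2) := by
  have he : (fun p : Ed d × Ed d => grad1 κ p.1 p.2) = fun p =>
      (InnerProductSpace.toDual ℝ (Ed d)).symm
        ((fderiv ℝ (uncurry κ) p).comp (ContinuousLinearMap.inl ℝ (Ed d) (Ed d))) :=
    funext fun p => grad1_eq (hκ1.differentiable one_ne_zero) p.1 p.2
  rw [he]
  exact (InnerProductSpace.toDual ℝ (Ed d)).symm.continuous.comp
    ((hκ1.continuous_fderiv one_ne_zero).clm_comp continuous_const)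

lemma hG2cont_aux (hκ1 : ContDiff ℝ 1 (uncurry κ)) :
    Continuous (fun p : Ed d × Ed d => grad2 κ p.1 p.2) := by
  have he : (fun p : Ed d × Ed d => grad2 κ p.1 p.2) = fun p =>
      (InnerProductSpace.toDual ℝ (Ed d)).symm
        ((fderiv ℝ (uncurry κ) p).comp (ContinuousLinearMap.inr ℝ (Ed d) (Ed d))) :=
    funext fun p => grad2_eq (hκ1.differentiable one_ne_zero) p.1 p.2
  rw [he]
  exact (InnerProductSpace.toDual ℝ (Ed d)).symm.continuous.comp
    ((hκ1.continuous_fderiv one_ne_zero).clm_comp continuous_const)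
end kappa

theorem key_aux {d : ℕ} (κ : Ed d → Ed d → ℝ)
    (hκ1 : ContDiff ℝ 1 (uncurry κ))
    (hκsymm : ∀ x y, κ x y = κ y x)
    (L : Ed d → ℝ) (hLpos : ∀ y, 0 ≤ L y) (hLcont : Continuous L)
    (hLip1 : ∀ y x x', ‖grad1 κ x y - grad1 κ x' y‖ ≤ L y * ‖x - x'‖)
    (hLip2 : ∀ y x x', ‖grad2 κ x y - grad2 κ x' y‖ ≤ L y * ‖x - x'‖)
    (μ : Measure (Ed d)) [IsProbabilityMeasure μ]
    {K : Set (Ed d)} (hKc : IsCompact K) (hK0 : μ Kᶜ = 0)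
    (v : Ed d → Ed d)
    (hv : ∀ y, v y = ∫ x, grad2 κ x y ∂μ) :
    HasDerivWithinAt (fun t : ℝ => (1/2) * ∫ x,
        (∫ y, κ x y ∂(Measure.map (fun x => x - t • v x) μ))
          ∂(Measure.map (fun x => x - t • v x) μ))
      (-(∫ y, ‖v y‖ ^ 2 ∂μ)) (Icc 0 1) 0 := by
  have hκd : Differentiable ℝ (uncurry κ) := hκ1.differentiable one_ne_zero
  have hκc : Continuous (fun p : Ed d × Ed d => κ p.1 p.2) := hκ1.continuous
  have hg1 : ∀ (y x : Ed d), HasGradientAt (fun x' => κ x' y) (grad1 κ x y) x :=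
    hg1_aux hκd
  have hg2 : ∀ (x y : Ed d), HasGradientAt (fun y' => κ x y') (grad2 κ x y) y :=
    hg2_aux hκd
  have hG1cont : Continuous (fun p : Ed d × Ed d => grad1 κ p.1 p.2) := hG1cont_aux hκ1
  have hG2cont : Continuous (fun p : Ed d × Ed d => grad2 κ p.1 p.2) := hG2cont_aux hκ1
  have hgsymm : ∀ x y : Ed d, grad2 κ x y = grad1 κ y x := fun x y =>
    grad2_symm hκsymm x y
  have hLip2' : ∀ (x y y' : Ed d), ‖grad2 κ x y - grad2 κ x y'‖ ≤ L x * ‖y - y'‖ := by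
    intro x y y'
    rw [hgsymm x y, hgsymm x y']
    exact hLip1 x y y'
  have hLip1' : ∀ (x y y' : Ed d), ‖grad1 κ x y - grad1 κ x y'‖ ≤ L x * ‖y - y'‖ := by
    intro x y y'
    rw [← hgsymm y x, ← hgsymm y' x]
    exact hLip2 x y y'
  have hg2int : ∀ y : Ed d, Integrable (fun x => grad2 κ x y) μ := fun y =>
    integrable_of_compact_null₁ hKc hK0
      (hG2cont.comp (continuous_id.prodMk continuous_const))
  have hvcont : Continuous v := by
    set Λ : ℝ := ∫ x, L x ∂μ with hΛ
    have hΛ0 : 0 ≤ Λ := integral_nonneg fun x => hLpos x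
    have hLμint : Integrable L μ := integrable_of_compact_null₁ hKc hK0 hLcont
    have hlip : LipschitzWith Λ.toNNReal v := by
      refine LipschitzWith.of_dist_le_mul fun y y' => ?_
      rw [dist_eq_norm, dist_eq_norm, hv y, hv y', Real.coe_toNNReal Λ hΛ0,
        ← integral_sub (hg2int y) (hg2int y')]
      calc ‖∫ x, (grad2 κ x y - grad2 κ x y') ∂μ‖
          ≤ ∫ x, ‖grad2 κ x y - grad2 κ x y'‖ ∂μ := norm_integral_le_integral_norm _
        _ ≤ ∫ x, L x * ‖y - y'‖ ∂μ := by
            refine integral_mono ((hg2int y).sub (hg2int y')).norm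
              (hLμint.mul_const _) fun x => hLip2' x y y'
        _ = Λ * ‖y - y'‖ := by rw [hΛ, ← integral_mul_const]
    exact hlip.continuous
  -- compact sets and bounds
  have hTcont : ∀ t : ℝ, Continuous (fun x : Ed d => x - t • v x) := fun t =>
    continuous_id.sub (hvcont.const_smul t)
  set K' : Set (Ed d) := (fun q : ℝ × Ed d => q.2 - q.1 • v q.2) '' (Icc (0:ℝ) 1 ×ˢ K)
    with hK'def
  have hK'c : IsCompact K' := (isCompact_Icc.prod hKc).image
    (continuous_snd.sub (continuous_fst.smul (hvcont.comp continuous_snd)))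
  have hmemK' : ∀ t ∈ Icc (0:ℝ) 1, ∀ x ∈ K, x - t • v x ∈ K' := fun t ht x hx =>
    ⟨(t, x), mem_prod.2 ⟨ht, hx⟩, rfl⟩
  obtain ⟨CL0, hCL0⟩ := (hKc.union hK'c).exists_bound_of_continuousOn hLcont.continuousOn
  set CL : ℝ := max CL0 0 with hCLdef
  have hCLnn : 0 ≤ CL := le_max_right _ _
  have hCLK : ∀ z ∈ K ∪ K', L z ≤ CL := fun z hz =>
    (le_abs_self _).trans ((by simpa using hCL0 z hz : |L z| ≤ CL0).trans (le_max_left _ _))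
  obtain ⟨CM0, hCM0⟩ := hKc.exists_bound_of_continuousOn hvcont.continuousOn
  set CM : ℝ := max CM0 0 with hCMdef
  have hCMnn : 0 ≤ CM := le_max_right _ _
  have hCMK : ∀ x ∈ K, ‖v x‖ ≤ CM := fun x hx => (hCM0 x hx).trans (le_max_left _ _)
  -- the product measure
  set P : Measure (Ed d × Ed d) := μ.prod μ with hPdef
  haveI : IsProbabilityMeasure P := by rw [hPdef]; infer_instance
  have hP0 : P ((K ×ˢ K)ᶜ) = 0 := by
    have hsub : (K ×ˢ K)ᶜ ⊆ (Kᶜ ×ˢ (univ : Set (Ed d))) ∪ ((univ : Set (Ed d)) ×ˢ Kᶜ) := by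
      intro p hp
      simp only [mem_compl_iff, mem_prod, not_and_or] at hp
      rcases hp with h | h
      · exact Or.inl ⟨h, mem_univ _⟩
      · exact Or.inr ⟨mem_univ _, h⟩
    refine measure_mono_null hsub (measure_union_null ?_ ?_) <;>
      rw [hPdef, Measure.prod_prod] <;> simp [hK0]
  have haeP : ∀ᵐ p ∂P, p ∈ K ×ˢ K := by
    rw [ae_iff]
    exact hP0
  -- integrability of all integrands
  have hΦint : ∀ t : ℝ, Integrable (fun p : Ed d × Ed d =>
      κ (p.1 - t • v p.1) (p.2 - t • v p.2)) P := fun t =>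
    integrable_of_compact_null (hKc.prod hKc) hP0
      (hκc.comp ((((hTcont t).comp continuous_fst)).prodMk ((hTcont t).comp continuous_snd)))
  have hΦ0int : Integrable (fun p : Ed d × Ed d => κ p.1 p.2) P :=
    integrable_of_compact_null (hKc.prod hKc) hP0 hκc
  have hΨ1int : Integrable (fun p : Ed d × Ed d => ⟪grad1 κ p.1 p.2, v p.1⟫) P :=
    integrable_of_compact_null (hKc.prod hKc) hP0
      (hG1cont.inner (hvcont.comp continuous_fst))
  have hΨ2int : Integrable (fun p : Ed d × Ed d => ⟪grad2 κ p.1 p.2, v p.2⟫) P :=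
    integrable_of_compact_null (hKc.prod hKc) hP0
      (hG2cont.inner (hvcont.comp continuous_snd))
  have hg1int : ∀ x : Ed d, Integrable (fun y => grad1 κ x y) μ := fun x =>
    integrable_of_compact_null₁ hKc hK0
      (hG1cont.comp (continuous_const.prodMk continuous_id))
  -- the double integral as a product integral
  have hgt : ∀ t : ℝ, (∫ x, (∫ y, κ x y ∂(Measure.map (fun x => x - t • v x) μ))
        ∂(Measure.map (fun x => x - t • v x) μ))
      = ∫ p, κ (p.1 - t • v p.1) (p.2 - t • v p.2) ∂P := by
    intro t
    have hTm : AEMeasurable (fun x : Ed d => x - t • v x) μ := (hTcont t).aemeasurable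
    have h1 : ∀ x' : Ed d, (∫ y, κ x' y ∂(Measure.map (fun x => x - t • v x) μ))
        = ∫ y, κ x' (y - t • v y) ∂μ := fun x' =>
      integral_map hTm (hκc.comp (continuous_const.prodMk continuous_id)).aestronglyMeasurable
    calc (∫ x, (∫ y, κ x y ∂(Measure.map (fun x => x - t • v x) μ))
          ∂(Measure.map (fun x => x - t • v x) μ))
        = ∫ x, (∫ y, κ x (y - t • v y) ∂μ) ∂(Measure.map (fun x => x - t • v x) μ) := by
          simp only [h1]
      _ = ∫ x, (∫ y, κ (x - t • v x) (y - t • v y) ∂μ) ∂μ := by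
          refine integral_map hTm ?_
          exact (((hκc.comp (continuous_fst.prodMk ((hTcont t).comp
            continuous_snd))).stronglyMeasurable).integral_prod_right').aestronglyMeasurable
      _ = ∫ p, κ (p.1 - t • v p.1) (p.2 - t • v p.2) ∂P :=
          integral_integral (hΦint t)
  -- the linear terms
  have hΨ1eq : (∫ p, ⟪grad1 κ p.1 p.2, v p.1⟫ ∂P) = ∫ y, ‖v y‖ ^ 2 ∂μ := by
    have h := integral_integral (μ := μ) (ν := μ)
      (f := fun x y => ⟪grad1 κ x y, v x⟫) hΨ1int
    rw [← h]
    refine integral_congr_ae (Filter.Eventually.of_forall fun x => ?_)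
    calc (∫ y, ⟪grad1 κ x y, v x⟫ ∂μ) = ∫ y, ⟪v x, grad1 κ x y⟫ ∂μ := by
          simp_rw [real_inner_comm]
      _ = ⟪v x, ∫ y, grad1 κ x y ∂μ⟫ := integral_inner (hg1int x) (v x)
      _ = ⟪v x, v x⟫ := by
          have he : (fun y => grad1 κ x y) = fun y => grad2 κ y x :=
            funext fun y => (hgsymm y x).symm
          rw [he, ← hv x]
      _ = ‖v x‖ ^ 2 := real_inner_self_eq_norm_sq _
  have hΨ2eq : (∫ p, ⟪grad2 κ p.1 p.2, v p.2⟫ ∂P) = ∫ y, ‖v y‖ ^ 2 ∂μ := by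
    have hswap : (∫ p, ⟪grad2 κ p.1 p.2, v p.2⟫ ∂P)
        = ∫ p, ⟪grad2 κ p.2 p.1, v p.1⟫ ∂P := by
      exact (integral_prod_swap
        (f := fun p : Ed d × Ed d => ⟪grad2 κ p.1 p.2, v p.2⟫)).symm
    rw [hswap]
    have hint : Integrable (fun p : Ed d × Ed d => ⟪grad2 κ p.2 p.1, v p.1⟫) P :=
      integrable_of_compact_null (hKc.prod hKc) hP0
        ((hG2cont.comp (continuous_snd.prodMk continuous_fst)).inner
          (hvcont.comp continuous_fst))
    have h := integral_integral (μ := μ) (ν := μ)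
      (f := fun x y => ⟪grad2 κ y x, v x⟫) hint
    rw [← h]
    refine integral_congr_ae (Filter.Eventually.of_forall fun x => ?_)
    calc (∫ y, ⟪grad2 κ y x, v x⟫ ∂μ) = ∫ y, ⟪v x, grad2 κ y x⟫ ∂μ := by
          simp_rw [real_inner_comm]
      _ = ⟪v x, ∫ y, grad2 κ y x ∂μ⟫ := integral_inner (hg2int x) (v x)
      _ = ⟪v x, v x⟫ := by rw [← hv x]
      _ = ‖v x‖ ^ 2 := real_inner_self_eq_norm_sq _
  -- pointwise Taylor estimate
  have pw : ∀ t ∈ Icc (0:ℝ) 1, ∀ x ∈ K, ∀ y ∈ K,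
      |κ (x - t • v x) (y - t • v y) - κ x y + t * ⟪grad1 κ x y, v x⟫ +
        t * ⟪grad2 κ x y, v y⟫| ≤ 3 * CL * CM ^ 2 * t ^ 2 := by
    intro t ht x hx y hy
    obtain ⟨ht0, ht1⟩ := ht
    set a : Ed d := t • v x with ha
    set b : Ed d := t • v y with hb
    have hna : ‖a‖ ≤ t * CM := by
      rw [ha, norm_smul, Real.norm_eq_abs, abs_of_nonneg ht0]
      exact mul_le_mul_of_nonneg_left (hCMK x hx) ht0
    have hnb : ‖b‖ ≤ t * CM := by
      rw [hb, norm_smul, Real.norm_eq_abs, abs_of_nonneg ht0]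
      exact mul_le_mul_of_nonneg_left (hCMK y hy) ht0
    have htCM : 0 ≤ t * CM := mul_nonneg ht0 hCMnn
    have hyb : y - b ∈ K ∪ K' := Or.inr (hmemK' t ⟨ht0, ht1⟩ y hy)
    have hsq : ∀ c : Ed d, ‖c‖ ≤ t * CM → ‖c‖ ^ 2 ≤ CM ^ 2 * t ^ 2 := by
      intro c hc
      calc ‖c‖ ^ 2 ≤ (t * CM) ^ 2 := by
            exact pow_le_pow_left₀ (norm_nonneg c) hc 2
        _ = CM ^ 2 * t ^ 2 := by ring
    have hA1 : |κ (x - a) (y - b) - κ x (y - b) + ⟪grad1 κ x (y - b), a⟫|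
        ≤ CL * (CM ^ 2 * t ^ 2) := by
      have h := taylor_bound (hg1 (y - b)) (hLpos (y - b))
        (fun p q => hLip1 (y - b) p q) x (x - a)
      have he : x - a - x = -a := by abel
      rw [he, inner_neg_right, sub_neg_eq_add, norm_neg] at h
      calc |κ (x - a) (y - b) - κ x (y - b) + ⟪grad1 κ x (y - b), a⟫|
          ≤ L (y - b) * ‖a‖ ^ 2 := h
        _ ≤ CL * (CM ^ 2 * t ^ 2) := by
            refine mul_le_mul (hCLK _ hyb) (hsq a hna) (sq_nonneg _) hCLnn
    have hA2 : |⟪grad1 κ x y - grad1 κ x (y - b), a⟫| ≤ CL * (CM ^ 2 * t ^ 2) := by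
      calc |⟪grad1 κ x y - grad1 κ x (y - b), a⟫|
          ≤ ‖grad1 κ x y - grad1 κ x (y - b)‖ * ‖a‖ := abs_real_inner_le_norm _ _
        _ ≤ (L x * ‖y - (y - b)‖) * ‖a‖ :=
            mul_le_mul_of_nonneg_right (hLip1' x y (y - b)) (norm_nonneg a)
        _ = (L x * ‖b‖) * ‖a‖ := by rw [sub_sub_cancel]
        _ ≤ (CL * (t * CM)) * (t * CM) := by
            refine mul_le_mul ?_ hna (norm_nonneg a) (mul_nonneg hCLnn htCM)
            exact mul_le_mul (hCLK x (Or.inl hx)) hnb (norm_nonneg b) hCLnn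
        _ = CL * (CM ^ 2 * t ^ 2) := by ring
    have hA3 : |κ x (y - b) - κ x y + ⟪grad2 κ x y, b⟫| ≤ CL * (CM ^ 2 * t ^ 2) := by
      have h := taylor_bound (hg2 x) (hLpos x) (fun p q => hLip2' x p q) y (y - b)
      have he : y - b - y = -b := by abel
      rw [he, inner_neg_right, sub_neg_eq_add, norm_neg] at h
      calc |κ x (y - b) - κ x y + ⟪grad2 κ x y, b⟫| ≤ L x * ‖b‖ ^ 2 := h
        _ ≤ CL * (CM ^ 2 * t ^ 2) := by
            refine mul_le_mul (hCLK x (Or.inl hx)) (hsq b hnb) (sq_nonneg _) hCLnn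
    have hsum : κ (x - a) (y - b) - κ x y + t * ⟪grad1 κ x y, v x⟫ +
          t * ⟪grad2 κ x y, v y⟫
        = (κ (x - a) (y - b) - κ x (y - b) + ⟪grad1 κ x (y - b), a⟫)
          + ⟪grad1 κ x y - grad1 κ x (y - b), a⟫
          + (κ x (y - b) - κ x y + ⟪grad2 κ x y, b⟫) := by
      simp only [inner_sub_left, ha, hb, real_inner_smul_right]
      ring
    rw [hsum]
    calc |(κ (x - a) (y - b) - κ x (y - b) + ⟪grad1 κ x (y - b), a⟫)
          + ⟪grad1 κ x y - grad1 κ x (y - b), a⟫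
          + (κ x (y - b) - κ x y + ⟪grad2 κ x y, b⟫)|
        ≤ |(κ (x - a) (y - b) - κ x (y - b) + ⟪grad1 κ x (y - b), a⟫)
          + ⟪grad1 κ x y - grad1 κ x (y - b), a⟫|
          + |κ x (y - b) - κ x y + ⟪grad2 κ x y, b⟫| := abs_add_le _ _
      _ ≤ (|κ (x - a) (y - b) - κ x (y - b) + ⟪grad1 κ x (y - b), a⟫|
          + |⟪grad1 κ x y - grad1 κ x (y - b), a⟫|)
          + |κ x (y - b) - κ x y + ⟪grad2 κ x y, b⟫| :=
            add_le_add_left (abs_add_le _ _) _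
      _ ≤ CL * (CM ^ 2 * t ^ 2) + CL * (CM ^ 2 * t ^ 2) + CL * (CM ^ 2 * t ^ 2) :=
            add_le_add (add_le_add hA1 hA2) hA3
      _ = 3 * CL * CM ^ 2 * t ^ 2 := by ring
  -- conclusion
  set D : ℝ := ∫ y, ‖v y‖ ^ 2 ∂μ with hDdef
  refine hasDerivWithinAt_of_quadratic (C := (3/2) * (CL * CM ^ 2)) fun t ht => ?_
  simp only [hgt]
  simp only [zero_smul, sub_zero]
  have hsplit : (∫ p, (κ (p.1 - t • v p.1) (p.2 - t • v p.2) - κ p.1 p.2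
        + t * ⟪grad1 κ p.1 p.2, v p.1⟫ + t * ⟪grad2 κ p.1 p.2, v p.2⟫) ∂P)
      = (∫ p, κ (p.1 - t • v p.1) (p.2 - t • v p.2) ∂P) - (∫ p, κ p.1 p.2 ∂P)
        + t * (∫ p, ⟪grad1 κ p.1 p.2, v p.1⟫ ∂P)
        + t * (∫ p, ⟪grad2 κ p.1 p.2, v p.2⟫ ∂P) := by
    have hI1 : Integrable (fun p : Ed d × Ed d =>
        κ (p.1 - t • v p.1) (p.2 - t • v p.2) - κ p.1 p.2) P := (hΦint t).sub hΦ0int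
    have hI2 : Integrable (fun p : Ed d × Ed d =>
        κ (p.1 - t • v p.1) (p.2 - t • v p.2) - κ p.1 p.2
          + t * ⟪grad1 κ p.1 p.2, v p.1⟫) P := hI1.add (hΨ1int.const_mul t)
    calc (∫ p, (κ (p.1 - t • v p.1) (p.2 - t • v p.2) - κ p.1 p.2
          + t * ⟪grad1 κ p.1 p.2, v p.1⟫ + t * ⟪grad2 κ p.1 p.2, v p.2⟫) ∂P)
        = (∫ p, (κ (p.1 - t • v p.1) (p.2 - t • v p.2) - κ p.1 p.2
          + t * ⟪grad1 κ p.1 p.2, v p.1⟫) ∂P) + ∫ p, t * ⟪grad2 κ p.1 p.2, v p.2⟫ ∂P :=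
          integral_add hI2 (hΨ2int.const_mul t)
      _ = ((∫ p, (κ (p.1 - t • v p.1) (p.2 - t • v p.2) - κ p.1 p.2) ∂P)
          + ∫ p, t * ⟪grad1 κ p.1 p.2, v p.1⟫ ∂P)
          + ∫ p, t * ⟪grad2 κ p.1 p.2, v p.2⟫ ∂P := by
          rw [integral_add hI1 (hΨ1int.const_mul t)]
      _ = (∫ p, κ (p.1 - t • v p.1) (p.2 - t • v p.2) ∂P) - (∫ p, κ p.1 p.2 ∂P)
          + t * (∫ p, ⟪grad1 κ p.1 p.2, v p.1⟫ ∂P)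
          + t * (∫ p, ⟪grad2 κ p.1 p.2, v p.2⟫ ∂P) := by
          rw [integral_sub (hΦint t) hΦ0int, integral_const_mul, integral_const_mul]
  have hmain : 1/2 * (∫ p, κ (p.1 - t • v p.1) (p.2 - t • v p.2) ∂P)
        - 1/2 * (∫ p, κ p.1 p.2 ∂P) - t * -D
      = (1/2) * ∫ p, (κ (p.1 - t • v p.1) (p.2 - t • v p.2) - κ p.1 p.2
        + t * ⟪grad1 κ p.1 p.2, v p.1⟫ + t * ⟪grad2 κ p.1 p.2, v p.2⟫) ∂P := by
    rw [hsplit, hΨ1eq, hΨ2eq]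
    ring
  rw [hmain]
  have hbound : |∫ p, (κ (p.1 - t • v p.1) (p.2 - t • v p.2) - κ p.1 p.2
        + t * ⟪grad1 κ p.1 p.2, v p.1⟫ + t * ⟪grad2 κ p.1 p.2, v p.2⟫) ∂P|
      ≤ 3 * CL * CM ^ 2 * t ^ 2 := by
    have hb := norm_integral_le_of_norm_le_const (μ := P)
      (C := 3 * CL * CM ^ 2 * t ^ 2)
      (f := fun p : Ed d × Ed d => κ (p.1 - t • v p.1) (p.2 - t • v p.2) - κ p.1 p.2
        + t * ⟪grad1 κ p.1 p.2, v p.1⟫ + t * ⟪grad2 κ p.1 p.2, v p.2⟫) ?_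
    · simpa [measure_univ] using hb
    · filter_upwards [haeP] with p hp
      rw [Real.norm_eq_abs]
      exact pw t ht p.1 hp.1 p.2 hp.2
  calc |1/2 * ∫ p, (κ (p.1 - t • v p.1) (p.2 - t • v p.2) - κ p.1 p.2
        + t * ⟪grad1 κ p.1 p.2, v p.1⟫ + t * ⟪grad2 κ p.1 p.2, v p.2⟫) ∂P|
      = 1/2 * |∫ p, (κ (p.1 - t • v p.1) (p.2 - t • v p.2) - κ p.1 p.2
        + t * ⟪grad1 κ p.1 p.2, v p.1⟫ + t * ⟪grad2 κ p.1 p.2, v p.2⟫) ∂P| := by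
        rw [abs_mul]
        norm_num
    _ ≤ 1/2 * (3 * CL * CM ^ 2 * t ^ 2) := by
        refine mul_le_mul_of_nonneg_left hbound (by norm_num)
    _ = (3/2) * (CL * CM ^ 2) * t ^ 2 := by ring

/-- Dissipation of the squared KSD along its Wasserstein gradient:
for a compactly supported probability measure `μ`, along `ρ_t = (id − t v_μ)_#μ` the
functional `F(ρ) = (1/2)∬k_π dρ⊗ρ` is differentiable at `t = 0` with derivative
`−∫‖v_μ(y)‖²dμ(y) ≤ 0`, where `v_μ(y) = ∫∇₂k_π(x,y)dμ(x)`. -/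
theorem statement17 {d : ℕ}
    (k : Ed d → Ed d → ℝ) (s : Ed d → Ed d)
    (hk : ContDiff ℝ 3 (uncurry k))
    (hksymm : ∀ x y, k x y = k y x)
    (hs : ContDiff ℝ 2 s)
    (L : Ed d → ℝ) (hLpos : ∀ y, 0 ≤ L y) (hLcont : Continuous L)
    (hLint : ∀ ρ : Measure (Ed d), IsProbabilityMeasure ρ →
      Integrable (fun x => ‖x‖ ^ 2) ρ → Integrable L ρ)
    (hLip1 : ∀ y x x', ‖grad1 (steinKernel k s) x y - grad1 (steinKernel k s) x' y‖ ≤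
      L y * ‖x - x'‖)
    (hLip2 : ∀ y x x', ‖grad2 (steinKernel k s) x y - grad2 (steinKernel k s) x' y‖ ≤
      L y * ‖x - x'‖)
    (μ : Measure (Ed d)) [IsProbabilityMeasure μ]
    (hμc : ∃ K : Set (Ed d), IsCompact K ∧ μ Kᶜ = 0)
    (F : Measure (Ed d) → ℝ)
    (hF : ∀ ρ : Measure (Ed d), F ρ = (1/2) * ∫ x, (∫ y, steinKernel k s x y ∂ρ) ∂ρ)
    (v : Ed d → Ed d)
    (hv : ∀ y, v y = ∫ x, grad2 (steinKernel k s) x y ∂μ) :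
    HasDerivWithinAt (fun t : ℝ => F (Measure.map (fun x => x - t • v x) μ))
      (-(∫ y, ‖v y‖ ^ 2 ∂μ)) (Icc 0 1) 0 ∧
    -(∫ y, ‖v y‖ ^ 2 ∂μ) ≤ 0 := by
  refine ⟨?_, neg_nonpos.mpr (integral_nonneg fun y => sq_nonneg _)⟩
  obtain ⟨K, hKc, hK0⟩ := hμc
  have hfun : (fun t : ℝ => F (Measure.map (fun x => x - t • v x) μ)) =
      fun t : ℝ => (1/2) * ∫ x,
        (∫ y, steinKernel k s x y ∂(Measure.map (fun x => x - t • v x) μ))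
          ∂(Measure.map (fun x => x - t • v x) μ) :=
    funext fun t => hF _
  rw [hfun]
  exact key_aux (steinKernel k s) (contDiff_stein hk hs) (stein_symm hk hksymm)
    L hLpos hLcont hLip1 hLip2 μ hKc hK0 v hv
end
end
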